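/- arXiv:2401.12477 — 9 statements merged into one kernel-verified Lean document; each statement's English description precedes it below -/
import Mathlib

section
/- Let F : 𝔽₂^{n₁} × 𝔽₂^{n₂} → 𝔽₂^{n₂+n₁} be a decomposable Boolean network, F(x,y) = (F₁(x), H(x,y)). Suppose F₁ has a unique attractor, which is a steady state {c} (so F₁(c) = c and every attractor of F₁ equals {c}), and suppose the downstream Boolean network F₂^c : y ↦ H(c,y) has a unique attractor C₂ = {d₁, …, d_r} (an attractor of length r, so F₂^c(d_i) = d_{i+1} with indices mod r). Then F has a unique attractor, namely the length-r attractor {(c,d₁), …, (c,d_r)}, with F(c,d_i) = (c,d_{i+1}) for all i (indices mod r). -/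
/-- An attractor of a Boolean network `F : α → α` is a minimal nonempty subset `C`
with `F(C) = C`. -/
def IsAttractor {α : Type*} (F : α → α) (C : Set α) : Prop :=
  C.Nonempty ∧ F '' C = C ∧ ∀ D ⊆ C, D.Nonempty → F '' D = D → D = C

/-!
An attractor `C` of `F(x, y) = (F₁ x, H x y)` projects onto an `F₁`-invariant set, which
therefore contains the unique upstream attractor `{c}`; so `C` meets the fibre `{c} × 𝔽₂^{n₂}`.
The fibre is forward invariant and `F` is injective on the finite invariant set `C`, so
`C ∩ fibre` is invariant, and by minimality `C` lies in the fibre.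
On the fibre `F` is conjugate to `F₂^c = H c` via `y ↦ (c, y)`, so the attractors of `F`
inside it are exactly the images of the attractors of `F₂^c`.
-/

open Set Function

theorem exists_isAttractor_subset {α : Type*} (F : α → α) {S : Set α} (hfin : S.Finite)
    (hne : S.Nonempty) (hinv : F '' S = S) : ∃ C ⊆ S, IsAttractor F C := by
  obtain ⟨n, hn⟩ : ∃ n, S.ncard = n := ⟨_, rfl⟩
  induction n using Nat.strong_induction_on generalizing S with
  | _ n ih =>
    by_cases hmin : ∀ D ⊆ S, D.Nonempty → F '' D = D → D = S
    · exact ⟨S, subset_rfl, hne, hinv, hmin⟩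
    · push Not at hmin
      obtain ⟨D, hDS, hDne, hDinv, hDS_ne⟩ := hmin
      obtain ⟨C, hCD, hC⟩ := ih D.ncard (hn ▸ ncard_lt_ncard (hDS.ssubset_of_ne hDS_ne) hfin)
        (hfin.subset hDS) hDne hDinv rfl
      exact ⟨C, hCD.trans hDS, hC⟩

theorem IsAttractor.subset_of_mapsTo {α : Type*} {F : α → α} {C S : Set α}
    (hC : IsAttractor F C) (hfin : C.Finite) (hS : MapsTo F S S) (hCS : (C ∩ S).Nonempty) :
    C ⊆ S := by
  obtain ⟨-, hCinv, hCmin⟩ := hC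
  have hCmaps : MapsTo F C C := fun _ hx => hCinv ▸ mem_image_of_mem F hx
  have hCinj : InjOn F C := ((hfin.surjOn_iff_bijOn_of_mapsTo hCmaps).mp hCinv.symm.subset).injOn
  have hmaps : MapsTo F (C ∩ S) (C ∩ S) := hCmaps.inter_inter hS
  have hinv : F '' (C ∩ S) = C ∩ S :=
    ((hfin.inter_of_left S).injOn_iff_bijOn_of_mapsTo hmaps |>.mp
      (hCinj.mono inter_subset_left)).image_eq
  exact inter_eq_left.mp (hCmin _ inter_subset_left hCS hinv)

theorem Function.Semiconj.isAttractor_image_iff {α β : Type*} {π : α → β} {G : α → α}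
    {F : β → β} (h : Semiconj π G F) (hπ : Injective π) {D : Set α} :
    IsAttractor F (π '' D) ↔ IsAttractor G D := by
  have himage : ∀ E : Set α, F '' (π '' E) = π '' (G '' E) := fun E => (h.set_image E).symm
  have hinv_iff : ∀ E : Set α, F '' (π '' E) = π '' E ↔ G '' E = E := fun E => by
    rw [himage, (image_injective.mpr hπ).eq_iff]
  constructor
  · rintro ⟨hne, hinv, hmin⟩
    refine ⟨image_nonempty.mp hne, (hinv_iff D).mp hinv, fun E hED hEne hEinv => ?_⟩
    exact image_injective.mpr hπ
      (hmin _ (image_mono hED) (hEne.image π) ((hinv_iff E).mpr hEinv))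
  · rintro ⟨hne, hinv, hmin⟩
    refine ⟨hne.image π, (hinv_iff D).mpr hinv, fun E hED hEne hEinv => ?_⟩
    have hE : π '' (π ⁻¹' E) = E := image_preimage_eq_of_subset (hED.trans (image_subset_range π D))
    rw [← hE] at hED hEne hEinv ⊢
    rw [hmin _ ((image_subset_image_iff hπ).mp hED) (image_nonempty.mp hEne)
      ((hinv_iff _).mp hEinv)]

section Decomposable

variable {α β : Type*} {F₁ : α → α} {H : α → β → β} {F : α × β → α × β}

theorem semiconj_fst_of_decomposable (hF : ∀ x y, F (x, y) = (F₁ x, H x y)) :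
    Semiconj Prod.fst F F₁ := fun p => by rw [hF p.1 p.2]

theorem semiconj_prodMk_of_decomposable (hF : ∀ x y, F (x, y) = (F₁ x, H x y)) {c : α}
    (hc : F₁ c = c) : Semiconj (Prod.mk c) (H c) F := fun y => by rw [hF, hc]

theorem IsAttractor.subset_range_prodMk_of_decomposable
    (hF : ∀ x y, F (x, y) = (F₁ x, H x y)) {c : α} (hc : F₁ c = c)
    (hc_uniq : ∀ C, IsAttractor F₁ C → C = {c}) {C : Set (α × β)} (hC : IsAttractor F C)
    (hfin : C.Finite) : C ⊆ range (Prod.mk c) := by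
  have hfst_inv : F₁ '' (Prod.fst '' C) = Prod.fst '' C := by
    rw [← (semiconj_fst_of_decomposable hF).set_image, hC.2.1]
  obtain ⟨C₁, hC₁, hC₁_att⟩ :=
    exists_isAttractor_subset F₁ (hfin.image _) (hC.1.image _) hfst_inv
  obtain ⟨p, hpC, hp⟩ : c ∈ Prod.fst '' C := hC₁ (hc_uniq C₁ hC₁_att ▸ rfl)
  refine hC.subset_of_mapsTo hfin ?_ ⟨p, hpC, p.2, by rw [← hp]⟩
  rintro _ ⟨y, rfl⟩
  exact ⟨H c y, semiconj_prodMk_of_decomposable hF hc y⟩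

end Decomposable

theorem stmt_0_general (n₁ n₂ r : ℕ)
    (F₁ : (Fin n₁ → ZMod 2) → (Fin n₁ → ZMod 2))
    (H : (Fin n₁ → ZMod 2) → (Fin n₂ → ZMod 2) → (Fin n₂ → ZMod 2))
    (F : (Fin n₁ → ZMod 2) × (Fin n₂ → ZMod 2) → (Fin n₁ → ZMod 2) × (Fin n₂ → ZMod 2))
    (hF : ∀ x y, F (x, y) = (F₁ x, H x y))
    (c : Fin n₁ → ZMod 2) (hc : F₁ c = c)
    (hc_uniq : ∀ C, IsAttractor F₁ C → C = {c})
    (d : ZMod r → (Fin n₂ → ZMod 2))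
    (hd_step : ∀ i : ZMod r, H c (d i) = d (i + 1))
    (hd_att : IsAttractor (fun y => H c y) (Set.range d))
    (hd_uniq : ∀ C, IsAttractor (fun y => H c y) C → C = Set.range d) :
    (∀ i : ZMod r, F (c, d i) = (c, d (i + 1))) ∧
    IsAttractor F (Set.range fun i : ZMod r => (c, d i)) ∧
    ∀ C, IsAttractor F C → C = Set.range fun i : ZMod r => (c, d i) := by
  have hconj := semiconj_prodMk_of_decomposable hF hc
  have hrange : (Set.range fun i : ZMod r => (c, d i)) = Prod.mk c '' Set.range d :=
    range_comp (Prod.mk c) d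
  refine ⟨fun i => by rw [hF, hc, hd_step], hrange ▸ (hconj.isAttractor_image_iff
    (Prod.mk_right_injective c)).mpr hd_att, fun C hC => ?_⟩
  have hC_eq : Prod.mk c '' (Prod.mk c ⁻¹' C) = C := image_preimage_eq_of_subset
    (hC.subset_range_prodMk_of_decomposable hF hc hc_uniq (toFinite C))
  rw [← hC_eq] at hC ⊢
  rw [hrange, hd_uniq _ ((hconj.isAttractor_image_iff (Prod.mk_right_injective c)).mp hC)]

/-- If the upstream module `F₁` of a decomposable Boolean network
`F(x,y) = (F₁ x, H x y)` has a unique attractor which is a steady state `{c}`, and the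
downstream network `F₂^c = H c ·` has a unique attractor, a cycle `{d₁, …, d_r}` of
length `r`, then `F` has a unique attractor, namely the length-`r` attractor
`{(c,d₁), …, (c,d_r)}`, with `F (c, dᵢ) = (c, dᵢ₊₁)` (indices mod `r`). -/
theorem stmt_0 (n₁ n₂ r : ℕ) (hr : 0 < r)
    (F₁ : (Fin n₁ → ZMod 2) → (Fin n₁ → ZMod 2))
    (H : (Fin n₁ → ZMod 2) → (Fin n₂ → ZMod 2) → (Fin n₂ → ZMod 2))
    (F : (Fin n₁ → ZMod 2) × (Fin n₂ → ZMod 2) → (Fin n₁ → ZMod 2) × (Fin n₂ → ZMod 2))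
    (hF : ∀ x y, F (x, y) = (F₁ x, H x y))
    (c : Fin n₁ → ZMod 2) (hc : F₁ c = c)
    (hc_att : IsAttractor F₁ {c})
    (hc_uniq : ∀ C, IsAttractor F₁ C → C = {c})
    (d : ZMod r → (Fin n₂ → ZMod 2))
    (hd_inj : Function.Injective d)
    (hd_step : ∀ i : ZMod r, H c (d i) = d (i + 1))
    (hd_att : IsAttractor (fun y => H c y) (Set.range d))
    (hd_uniq : ∀ C, IsAttractor (fun y => H c y) C → C = Set.range d) :
    (∀ i : ZMod r, F (c, d i) = (c, d (i + 1))) ∧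
    IsAttractor F (Set.range fun i : ZMod r => (c, d i)) ∧
    ∀ C, IsAttractor F C → C = Set.range fun i : ZMod r => (c, d i) :=
  stmt_0_general n₁ n₂ r F₁ H F hF c hc hc_uniq d hd_step hd_att hd_uniq
end

section
/- Let F : 𝔽₂^{n₁} × 𝔽₂^{n₂} → 𝔽₂^{n₁+n₂} be a decomposable Boolean network, F(x,y) = (F₁(x), H(x,y)), and let C = {(c,d₁), …, (c,d_r)} be an attractor of F, where {c} is a steady state of F₁ and C₂ = {d₁,…,d_r} is an attractor of the downstream network F₂^c : y ↦ H(c,y). Suppose G₁ : 𝔽₂^{n₁} → 𝔽₂^{n₁} (the upstream network after applying a control μ₁) has unique attractor {c}, and H' : 𝔽₂^{n₁} × 𝔽₂^{n₂} → 𝔽₂^{n₂} (the downstream update after applying a control μ₂) is such that y ↦ H'(c,y) has unique attractor C₂. Then the controlled network F^μ(x,y) := (G₁(x), H'(x,y)) has C as its unique attractor; that is, the combined control μ = (μ₁, μ₂) stabilizes F in its existing attractor C. -/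
/-!
On a finite state space the attractors are exactly the orbits of periodic points, so the image
of an attractor under a semiconjugacy is again an attractor. The controlled network
`(x, y) ↦ (G₁ x, H' x y)` is semiconjugate to `G₁` via `Prod.fst`, so the first coordinates of
any of its attractors form an attractor of `G₁`, i.e. `{c}`. The attractor therefore lies in the
fibre `{c} × 𝔽₂^{n₂}`, on which the network is conjugate to `H' c` via `y ↦ (c, y)`; there it
must be `{c} × C₂`.
-/

open Function Set

variable {α β : Type*}

theorem isAttractor_range_iterate {f : α → α} {x : α} {n : ℕ} (hn : 0 < n)
    (hx : IsPeriodicPt f n x) : IsAttractor f (range fun k => f^[k] x) := by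
  refine ⟨⟨x, 0, rfl⟩, Subset.antisymm ?_ ?_, ?_⟩
  · rintro _ ⟨_, ⟨k, rfl⟩, rfl⟩
    exact ⟨k + 1, iterate_succ_apply' f k x⟩
  · rintro _ ⟨k, rfl⟩
    refine ⟨f^[k + n - 1] x, ⟨_, rfl⟩, ?_⟩
    rw [← iterate_succ_apply' f, Nat.succ_eq_add_one, Nat.sub_add_cancel (by omega : 1 ≤ k + n),
      iterate_add_apply, hx.isFixedPt.eq]
  · rintro E hE ⟨_, hk⟩ hEf
    obtain ⟨k, rfl⟩ := hE hk
    have hmaps : MapsTo f E E := mapsTo_iff_image_subset.2 hEf.subset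
    -- `x` is reached again from `f^[k] x` after `n * k - k` steps.
    have hx_mem : x ∈ E := by
      have h := hmaps.iterate (n * k - k) hk
      rwa [← iterate_add_apply, Nat.sub_add_cancel (Nat.le_mul_of_pos_left k hn),
        (hx.mul_const k).isFixedPt.eq] at h
    refine Subset.antisymm hE ?_
    rintro _ ⟨m, rfl⟩
    exact hmaps.iterate m hx_mem

namespace IsAttractor

theorem exists_isPeriodicPt_eq_range_iterate [Finite α] {f : α → α} {D : Set α}
    (hD : IsAttractor f D) :
    ∃ x n, 0 < n ∧ IsPeriodicPt f n x ∧ D = range fun k => f^[k] x := by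
  obtain ⟨⟨x₀, hx₀⟩, hDf, hmin⟩ := hD
  have hmaps : MapsTo f D D := mapsTo_iff_image_subset.2 hDf.subset
  obtain ⟨a, b, hab, heq⟩ : ∃ a b, a < b ∧ f^[a] x₀ = f^[b] x₀ := by
    obtain ⟨a, b, hne, heq⟩ := Finite.exists_ne_map_eq_of_infinite (f^[·] x₀)
    rcases hne.lt_or_gt with h | h
    exacts [⟨a, b, h, heq⟩, ⟨b, a, h, heq.symm⟩]
  have hper : IsPeriodicPt f (b - a) (f^[a] x₀) := by
    rw [IsPeriodicPt, IsFixedPt, ← iterate_add_apply, Nat.sub_add_cancel hab.le, heq]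
  have horbit := isAttractor_range_iterate (Nat.sub_pos_of_lt hab) hper
  refine ⟨f^[a] x₀, b - a, Nat.sub_pos_of_lt hab, hper, (hmin _ ?_ horbit.1 horbit.2.1).symm⟩
  rintro _ ⟨k, rfl⟩
  exact hmaps.iterate k (hmaps.iterate a hx₀)

theorem image [Finite α] {f : α → α} {g : β → β} {π : α → β} (h : Semiconj π f g)
    {D : Set α} (hD : IsAttractor f D) : IsAttractor g (π '' D) := by
  obtain ⟨x, n, hn, hx, rfl⟩ := hD.exists_isPeriodicPt_eq_range_iterate
  have horbit : (π ∘ fun k => f^[k] x) = fun k => g^[k] (π x) :=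
    funext fun k => (h.iterate_right k).eq x
  rw [← range_comp, horbit]
  exact isAttractor_range_iterate hn (hx.map h)

theorem preimage {f : α → α} {g : β → β} {π : α → β} (h : Semiconj π f g) (hπ : Injective π)
    {D : Set β} (hD : IsAttractor g D) (hDπ : D ⊆ range π) : IsAttractor f (π ⁻¹' D) := by
  obtain ⟨hne, hDg, hmin⟩ := hD
  have himage : π '' (π ⁻¹' D) = D := image_preimage_eq_of_subset hDπ
  refine ⟨?_, ?_, fun E hE hEne hEf => ?_⟩
  · exact image_nonempty.1 (himage ▸ hne)
  · apply image_injective.2 hπ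
    rw [h.set_image, himage, hDg]
  · have hπE : π '' E = D :=
      hmin _ (image_subset_iff.2 hE) (hEne.image π) (by rw [← h.set_image, hEf])
    rw [← hπE, hπ.preimage_image]

end IsAttractor

theorem stmt_2_general (n₁ n₂ r : ℕ)
    (c : Fin n₁ → ZMod 2)
    (d : ZMod r → (Fin n₂ → ZMod 2))
    (G₁ : (Fin n₁ → ZMod 2) → (Fin n₁ → ZMod 2))
    (hG₁_att : IsAttractor G₁ {c})
    (hG₁_uniq : ∀ D, IsAttractor G₁ D → D = {c})
    (H' : (Fin n₁ → ZMod 2) → (Fin n₂ → ZMod 2) → (Fin n₂ → ZMod 2))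
    (hH'_att : IsAttractor (fun y => H' c y) (Set.range d))
    (hH'_uniq : ∀ D, IsAttractor (fun y => H' c y) D → D = Set.range d) :
    IsAttractor (fun z : (Fin n₁ → ZMod 2) × (Fin n₂ → ZMod 2) => (G₁ z.1, H' z.1 z.2))
      (Set.range fun i : ZMod r => (c, d i)) ∧
    ∀ D, IsAttractor (fun z : (Fin n₁ → ZMod 2) × (Fin n₂ → ZMod 2) => (G₁ z.1, H' z.1 z.2)) D →
      D = Set.range fun i : ZMod r => (c, d i) := by
  have hG₁c : G₁ c = c := by simpa using hG₁_att.2.1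
  have hfibre : Semiconj (Prod.mk c) (fun y => H' c y)
      (fun z : (Fin n₁ → ZMod 2) × (Fin n₂ → ZMod 2) => (G₁ z.1, H' z.1 z.2)) :=
    fun y => by simp [hG₁c]
  have hC : (Set.range fun i : ZMod r => (c, d i)) = Prod.mk c '' Set.range d := range_comp _ _
  refine ⟨hC ▸ hH'_att.image hfibre, fun D hD => ?_⟩
  have hfst : Prod.fst '' D = {c} := hG₁_uniq _ (hD.image (π := Prod.fst) (g := G₁) fun _ => rfl)
  have hD_fibre : D ⊆ range (Prod.mk c) := fun z hz =>
    ⟨z.2, by rw [← (hfst ▸ mem_image_of_mem Prod.fst hz : z.1 ∈ ({c} : Set _))]⟩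
  rw [hC, ← hH'_uniq _ (hD.preimage hfibre (Prod.mk_right_injective c) hD_fibre),
    image_preimage_eq_of_subset hD_fibre]

/-- **Corollary 3.5, steady-state upstream case.**
Let `F(x,y) = (F₁ x, H x y)` be decomposable and let
`C = {(c,d₁), …, (c,d_r)}` be an attractor of `F`, where `{c}` is a steady state of
`F₁` and `C₂ = {d₁,…,d_r}` is an attractor of `F₂^c = H c ·`. If the controlled
upstream network `G₁` has unique attractor `{c}`, and the controlled downstream update
`H'` is such that `H' c ·` has unique attractor `C₂`, then the controlled network
`F^μ(x,y) = (G₁ x, H' x y)` has `C` as its unique attractor. -/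
theorem stmt_2 (n₁ n₂ r : ℕ) (hr : 0 < r)
    (F₁ : (Fin n₁ → ZMod 2) → (Fin n₁ → ZMod 2))
    (H : (Fin n₁ → ZMod 2) → (Fin n₂ → ZMod 2) → (Fin n₂ → ZMod 2))
    (F : (Fin n₁ → ZMod 2) × (Fin n₂ → ZMod 2) → (Fin n₁ → ZMod 2) × (Fin n₂ → ZMod 2))
    (hF : ∀ x y, F (x, y) = (F₁ x, H x y))
    (c : Fin n₁ → ZMod 2) (hc : F₁ c = c)
    (d : ZMod r → (Fin n₂ → ZMod 2))
    (hd_inj : Function.Injective d)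
    (hd_step : ∀ i : ZMod r, H c (d i) = d (i + 1))
    (hd_att : IsAttractor (fun y => H c y) (Set.range d))
    (hC : IsAttractor F (Set.range fun i : ZMod r => (c, d i)))
    (G₁ : (Fin n₁ → ZMod 2) → (Fin n₁ → ZMod 2))
    (hG₁_att : IsAttractor G₁ {c})
    (hG₁_uniq : ∀ D, IsAttractor G₁ D → D = {c})
    (H' : (Fin n₁ → ZMod 2) → (Fin n₂ → ZMod 2) → (Fin n₂ → ZMod 2))
    (hH'_att : IsAttractor (fun y => H' c y) (Set.range d))
    (hH'_uniq : ∀ D, IsAttractor (fun y => H' c y) D → D = Set.range d) :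
    IsAttractor (fun z : (Fin n₁ → ZMod 2) × (Fin n₂ → ZMod 2) => (G₁ z.1, H' z.1 z.2))
      (Set.range fun i : ZMod r => (c, d i)) ∧
    ∀ D, IsAttractor (fun z : (Fin n₁ → ZMod 2) × (Fin n₂ → ZMod 2) => (G₁ z.1, H' z.1 z.2)) D →
      D = Set.range fun i : ZMod r => (c, d i) :=
  stmt_2_general n₁ n₂ r c d G₁ hG₁_att hG₁_uniq H' hH'_att hH'_uniq
end

section
/- The hypothesis in Theorem 3.3 that at least one of the two module attractors be a steady state cannot be dropped: the Boolean network F : 𝔽₂ × 𝔽₂ → 𝔽₂ × 𝔽₂ given by F(x,y) = (x+1, y+1) is decomposable with upstream module F₁(x) = x+1 and downstream update H(x,y) = y+1; F₁ has a unique attractor, the 2-cycle {0,1}, and for every c ∈ 𝔽₂ the downstream network F₂^c(y) = y+1 has a unique attractor, the 2-cycle {0,1}; yet F has exactly two attractors, namely the 2-cycles {(0,0),(1,1)} and {(0,1),(1,0)}. -/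
lemma pair_attr {α : Type*} (F : α → α) {a b : α} (ha : F a = b) (hb : F b = a) :
    IsAttractor F {a, b} := by
  refine ⟨⟨a, Or.inl rfl⟩, ?_, ?_⟩
  · rw [Set.image_pair, ha, hb, Set.pair_comm]
  · intro D hD hne hFD
    obtain ⟨x, hx⟩ := hne
    have hmem : a ∈ D ∧ b ∈ D := by
      rcases hD hx with h | h
      · subst h
        refine ⟨hx, ?_⟩
        rw [← ha, ← hFD]; exact ⟨x, hx, rfl⟩
      · subst h
        refine ⟨?_, hx⟩
        rw [← hb, ← hFD]; exact ⟨x, hx, rfl⟩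
    apply Set.Subset.antisymm hD
    intro y hy
    rcases hy with h | h <;> subst h
    · exact hmem.1
    · exact hmem.2

lemma attr_of_cycle2 {α : Type*} (F : α → α) {C : Set α} (hC : IsAttractor F C)
    {p : α} (hp : p ∈ C) (h2 : F (F p) = p) : C = {p, F p} := by
  obtain ⟨-, hinv, hmin⟩ := hC
  have hFp : F p ∈ C := by rw [← hinv]; exact ⟨p, hp, rfl⟩
  have hsub : {p, F p} ⊆ C := by
    intro y hy; rcases hy with h | h <;> subst h <;> assumption
  have himg : F '' {p, F p} = {p, F p} := by
    rw [Set.image_pair, h2, Set.pair_comm]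
  exact (hmin _ hsub ⟨p, Or.inl rfl⟩ himg).symm

/-- The steady-state hypothesis in Theorem 3.3 cannot be dropped:
for `F(x,y) = (x+1, y+1)` on `𝔽₂ × 𝔽₂`, the upstream module `F₁(x) = x+1` has the
2-cycle `{0,1}` as its unique attractor, and for every `c ∈ 𝔽₂` the downstream
network `F₂^c(y) = y+1` has the 2-cycle `{0,1}` as its unique attractor; yet `F` has
exactly two attractors, the 2-cycles `{(0,0),(1,1)}` and `{(0,1),(1,0)}`. -/
theorem stmt_3
    (F : ZMod 2 × ZMod 2 → ZMod 2 × ZMod 2) (hF : ∀ p, F p = (p.1 + 1, p.2 + 1))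
    (F₁ : ZMod 2 → ZMod 2) (hF₁ : ∀ x, F₁ x = x + 1)
    (H : ZMod 2 → ZMod 2 → ZMod 2) (hH : ∀ x y, H x y = y + 1) :
    (∀ x y, F (x, y) = (F₁ x, H x y)) ∧
    (F₁ 0 = 1 ∧ F₁ 1 = 0) ∧
    IsAttractor F₁ {0, 1} ∧ (∀ C, IsAttractor F₁ C → C = {0, 1}) ∧
    (∀ c : ZMod 2, IsAttractor (fun y => H c y) {0, 1} ∧
      ∀ C, IsAttractor (fun y => H c y) C → C = {0, 1}) ∧
    (F (0, 0) = (1, 1) ∧ F (1, 1) = (0, 0) ∧ F (0, 1) = (1, 0) ∧ F (1, 0) = (0, 1)) ∧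
    IsAttractor F {(0, 0), (1, 1)} ∧
    IsAttractor F {(0, 1), (1, 0)} ∧
    ({((0 : ZMod 2), (0 : ZMod 2)), ((1 : ZMod 2), (1 : ZMod 2))} : Set (ZMod 2 × ZMod 2)) ≠
      {(0, 1), (1, 0)} ∧
    (∀ C, IsAttractor F C → C = {(0, 0), (1, 1)} ∨ C = {(0, 1), (1, 0)}) := by
  have hz : ∀ x : ZMod 2, x = 0 ∨ x = 1 := by decide
  have h11 : (1 : ZMod 2) + 1 = 0 := by decide
  have h01 : (0 : ZMod 2) + 1 = 1 := by decide
  have hFF : ∀ p, F (F p) = p := by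
    intro p
    rw [hF, hF]
    simp only
    rw [add_assoc, add_assoc, h11, add_zero, add_zero]
  have hF₁₁ : ∀ x, F₁ (F₁ x) = x := by
    intro x; rw [hF₁, hF₁, add_assoc, h11, add_zero]
  refine ⟨?_, ⟨?_, ?_⟩, ?_, ?_, ?_, ⟨?_, ?_, ?_, ?_⟩, ?_, ?_, ?_, ?_⟩
  · intro x y; rw [hF, hF₁, hH]
  · rw [hF₁, h01]
  · rw [hF₁, h11]
  · exact pair_attr F₁ (by rw [hF₁, h01]) (by rw [hF₁, h11])
  · intro C hC
    obtain ⟨x, hx⟩ := hC.1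
    have := attr_of_cycle2 F₁ hC hx (hF₁₁ x)
    rcases hz x with h | h <;> subst h <;> rw [this, hF₁]
    · rw [h01]
    · rw [h11, Set.pair_comm]
  · intro c
    constructor
    · exact pair_attr _ (by simp only [hH, h01]) (by simp only [hH, h11])
    · intro C hC
      obtain ⟨x, hx⟩ := hC.1
      have h2 : (fun y => H c y) ((fun y => H c y) x) = x := by
        simp only [hH, add_assoc, h11, add_zero]
      have := attr_of_cycle2 _ hC hx h2
      rcases hz x with h | h <;> subst h <;> rw [this] <;> simp only [hH]
      · rw [h01]
      · rw [h11, Set.pair_comm]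
  · rw [hF]; simp [h01]
  · rw [hF]; simp [h11]
  · rw [hF]; simp [h01, h11]
  · rw [hF]; simp [h01, h11]
  · exact pair_attr F (by rw [hF]; simp [h01]) (by rw [hF]; simp [h11])
  · exact pair_attr F (by rw [hF]; simp [h01, h11]) (by rw [hF]; simp [h01, h11])
  · intro h
    have : ((0 : ZMod 2), (0 : ZMod 2)) ∈ ({(0, 1), (1, 0)} : Set (ZMod 2 × ZMod 2)) := by
      rw [← h]; exact Or.inl rfl
    revert this; decide
  · intro C hC
    obtain ⟨⟨a, b⟩, hp⟩ := hC.1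
    have heq := attr_of_cycle2 F hC hp (hFF _)
    rcases hz a with h | h <;> subst h <;> rcases hz b with h | h <;> subst h <;>
        rw [heq, hF] <;> simp only [h01, h11]
    · exact Or.inl trivial
    · exact Or.inr trivial
    · exact Or.inr (Set.pair_comm _ _)
    · exact Or.inl (Set.pair_comm _ _)
end

section
/- Let F : 𝔽₂^{n₁} × 𝔽₂^{n₂} → 𝔽₂^{n₁+n₂} be a decomposable Boolean network, F(x,y) = (F₁(x), H(x,y)). If C is an attractor of F, then its projection π₁(C) = { x ∈ 𝔽₂^{n₁} : (x,y) ∈ C for some y } is an attractor of the upstream module F₁. -/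
/-- For a decomposable Boolean network `F(x,y) = (F₁ x, H x y)`,
the projection `π₁(C)` of any attractor `C` of `F` to the first block of variables is
an attractor of the upstream module `F₁`. -/
theorem stmt_4 (n₁ n₂ : ℕ)
    (F₁ : (Fin n₁ → ZMod 2) → (Fin n₁ → ZMod 2))
    (H : (Fin n₁ → ZMod 2) → (Fin n₂ → ZMod 2) → (Fin n₂ → ZMod 2))
    (F : (Fin n₁ → ZMod 2) × (Fin n₂ → ZMod 2) → (Fin n₁ → ZMod 2) × (Fin n₂ → ZMod 2))
    (hF : ∀ x y, F (x, y) = (F₁ x, H x y))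
    (C : Set ((Fin n₁ → ZMod 2) × (Fin n₂ → ZMod 2)))
    (hC : IsAttractor F C) :
    IsAttractor F₁ (Prod.fst '' C) := by
  obtain ⟨hne, himg, hmin⟩ := hC
  have hfst : ∀ p : (Fin n₁ → ZMod 2) × (Fin n₂ → ZMod 2), (F p).1 = F₁ p.1 := by
    intro ⟨x, y⟩; rw [hF]
  have h1 : F₁ '' (Prod.fst '' C) = Prod.fst '' C := by
    rw [Set.image_image]
    calc (fun p => F₁ p.1) '' C = (fun p => (F p).1) '' C := by
          apply Set.image_congr; intro p _; exact (hfst p).symm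
      _ = Prod.fst '' (F '' C) := by rw [Set.image_image]
      _ = Prod.fst '' C := by rw [himg]
  refine ⟨hne.image _, h1, ?_⟩
  intro D hD hDne hDimg
  -- F₁ is injective on fst '' C
  have hinj : Set.InjOn F₁ (Prod.fst '' C) := by
    have hfin : (Prod.fst '' C).Finite := Set.toFinite _
    have hm : Set.MapsTo F₁ (Prod.fst '' C) (Prod.fst '' C) := by
      intro x hx; rw [← h1]; exact ⟨x, hx, rfl⟩
    have := (hfin.surjOn_iff_bijOn_of_mapsTo hm).1 (by rw [Set.SurjOn, h1])
    exact this.injOn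
  set C' : Set ((Fin n₁ → ZMod 2) × (Fin n₂ → ZMod 2)) := {p ∈ C | p.1 ∈ D} with hC'
  have hC'sub : C' ⊆ C := fun p hp => hp.1
  have hC'ne : C'.Nonempty := by
    obtain ⟨x, hx⟩ := hDne
    obtain ⟨p, hp, hpx⟩ := hD hx
    exact ⟨p, hp, hpx ▸ hx⟩
  have hC'img : F '' C' = C' := by
    apply Set.eq_of_subset_of_subset
    · rintro _ ⟨p, ⟨hpC, hpD⟩, rfl⟩
      refine ⟨himg ▸ ⟨p, hpC, rfl⟩, ?_⟩
      rw [hfst, ← hDimg]; exact ⟨p.1, hpD, rfl⟩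
    · rintro p ⟨hpC, hpD⟩
      obtain ⟨q, hq, hqp⟩ := himg ▸ hpC
      obtain ⟨d, hd, hdp⟩ := hDimg ▸ hpD
      have hq1 : q.1 = d := by
        apply hinj ⟨q, hq, rfl⟩ (hD hd)
        rw [← hfst, hqp, ← hdp]
      exact ⟨q, ⟨hq, hq1 ▸ hd⟩, hqp⟩
  have := hmin C' hC'sub hC'ne hC'img
  apply Set.eq_of_subset_of_subset hD
  rintro _ ⟨p, hp, rfl⟩
  rw [← this] at hp
  exact hp.2
end

section
/- Let F : 𝔽₂^{n₁} × 𝔽₂^{n₂} → 𝔽₂^{n₁+n₂} be a decomposable Boolean network, F(x,y) = (F₁(x), H(x,y)), and let c ∈ 𝔽₂^{n₁} be a steady state of F₁. Then the map C₂ ↦ {c} × C₂ = { (c,d) : d ∈ C₂ } is a bijection between the attractors of the downstream Boolean network F₂^c : y ↦ H(c,y) and the attractors C of F whose projection to the first block equals {c}; moreover this bijection preserves attractor length. -/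
/-!
Since `c` is fixed by `F₁`, the fibre `{c} × 𝔽₂^{n₂}` is invariant under `F`, and the
injection `y ↦ (c, y)` conjugates `F₂^c = H c` to the restriction of `F` to that fibre.
An injective semiconjugacy carries attractors to attractors and back, because every subset
of the image is itself the image of a subset; the attractors of `F` lying over `{c}` are
exactly those contained in the fibre.
-/

open Function Set

section Semiconj

variable {α β : Type*} {F : α → α} {G : β → β} {g : β → α}

theorem Function.Semiconj.image_invariant_iff (hsc : Semiconj g G F) (hg : Injective g)
    {D : Set β} : F '' (g '' D) = g '' D ↔ G '' D = D := by
  rw [← hsc.set_image D, hg.image_injective.eq_iff]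

theorem Function.Semiconj.isAttractor_image_iff_s5 (hsc : Semiconj g G F) (hg : Injective g)
    {C : Set β} : IsAttractor F (g '' C) ↔ IsAttractor G C := by
  simp only [IsAttractor, image_nonempty, hsc.image_invariant_iff hg]
  refine and_congr_right fun _ => and_congr_right fun _ => ⟨fun hmin D hDC hD hGD => ?_,
    fun hmin D hDC hD hFD => ?_⟩
  · exact hg.image_injective <|
      hmin _ (image_mono hDC) (hD.image g) (hsc.image_invariant_iff hg |>.mpr hGD)
  · have hD_eq : g '' (g ⁻¹' D) = D :=
      image_preimage_eq_of_subset (hDC.trans (image_subset_range g C))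
    rw [← hD_eq] at hDC hD hFD ⊢
    rw [hmin _ ((image_subset_image_iff hg).mp hDC) hD.of_image
      ((hsc.image_invariant_iff hg).mp hFD)]

end Semiconj

theorem Set.eq_singleton_prod_preimage_of_fst_image_eq {α β : Type*} {C : Set (α × β)} {c : α}
    (h : Prod.fst '' C = {c}) : C = {c} ×ˢ (Prod.mk c ⁻¹' C) := by
  ext ⟨a, b⟩
  refine ⟨fun hab => ?_, fun ⟨ha, hb⟩ => ?_⟩
  · have ha : a ∈ ({c} : Set α) := h ▸ mem_image_of_mem Prod.fst hab
    obtain rfl : a = c := ha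
    exact ⟨rfl, hab⟩
  · obtain rfl : a = c := ha
    exact hb

/-- Let `F(x,y) = (F₁ x, H x y)` be a decomposable Boolean network
and let `c` be a steady state of `F₁`. Then `C₂ ↦ {c} × C₂` is a bijection between the
attractors of the downstream network `F₂^c = H c ·` and the attractors of `F` whose
projection to the first block equals `{c}`, and it preserves attractor length. -/
theorem stmt_5 (n₁ n₂ : ℕ)
    (F₁ : (Fin n₁ → ZMod 2) → (Fin n₁ → ZMod 2))
    (H : (Fin n₁ → ZMod 2) → (Fin n₂ → ZMod 2) → (Fin n₂ → ZMod 2))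
    (F : (Fin n₁ → ZMod 2) × (Fin n₂ → ZMod 2) → (Fin n₁ → ZMod 2) × (Fin n₂ → ZMod 2))
    (hF : ∀ x y, F (x, y) = (F₁ x, H x y))
    (c : Fin n₁ → ZMod 2) (hc : F₁ c = c) :
    -- the map is onto the attractors of `F` over `{c}`, and only produces such attractors
    (∀ C : Set ((Fin n₁ → ZMod 2) × (Fin n₂ → ZMod 2)),
      (IsAttractor F C ∧ Prod.fst '' C = {c}) ↔
        ∃ C₂ : Set (Fin n₂ → ZMod 2),
          IsAttractor (fun y => H c y) C₂ ∧ C = ({c} : Set (Fin n₁ → ZMod 2)) ×ˢ C₂) ∧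
    -- the map is injective
    (∀ C₂ C₂' : Set (Fin n₂ → ZMod 2),
      (({c} : Set (Fin n₁ → ZMod 2)) ×ˢ C₂ = ({c} : Set (Fin n₁ → ZMod 2)) ×ˢ C₂') →
        C₂ = C₂') ∧
    -- the map preserves attractor length
    (∀ C₂ : Set (Fin n₂ → ZMod 2),
      IsAttractor (fun y => H c y) C₂ →
        (({c} : Set (Fin n₁ → ZMod 2)) ×ˢ C₂).ncard = C₂.ncard) := by
  have hsc : Semiconj (Prod.mk c) (H c) F := fun y => by rw [hF, hc]
  have hfibre (C₂ : Set (Fin n₂ → ZMod 2)) :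
      IsAttractor F ({c} ×ˢ C₂) ↔ IsAttractor (H c) C₂ := by
    rw [singleton_prod]
    exact hsc.isAttractor_image_iff_s5 (Prod.mk_right_injective c)
  refine ⟨fun C => ⟨fun ⟨hC, hfst⟩ => ?_, ?_⟩, fun C₂ C₂' h => ?_, fun C₂ _ => ?_⟩
  · have hC_eq := eq_singleton_prod_preimage_of_fst_image_eq hfst
    exact ⟨_, (hfibre _).mp (hC_eq ▸ hC), hC_eq⟩
  · rintro ⟨C₂, hC₂, rfl⟩
    exact ⟨(hfibre C₂).mpr hC₂, fst_image_prod _ hC₂.1⟩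
  · simp only [singleton_prod] at h
    exact (Prod.mk_right_injective c).image_injective h
  · rw [ncard_prod, ncard_singleton, one_mul]
end

section
/- (Existence part of the stratification theorem.) Every Boolean function f : 𝔽₂ⁿ → 𝔽₂ with f ≢ 0 can be written as f = M₁(M₂(⋯(M_{r-1}(M_r·p_C + 1) + 1)⋯) + 1) + q, where r ≥ 0, each M_i = ∏_{j=1}^{k_i} (x_{i_j} + a_{i_j}) is a nonconstant extended monomial, q ∈ 𝔽₂, each variable of f appears in exactly one of M₁, …, M_r, p_C, the core polynomial p_C is either identically 1 or a non-canalizing function, and the exceptional-case conditions hold: if p_C ≡ 1 and r ≠ 1 then k_r ≥ 2, and if p_C ≡ 1, r = 1 and k₁ = 1 then q = 0. (When f is not canalizing, r = 0 and p_C = f.) -/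
/-- A Boolean function `f` is essential in (depends on) the variable `v` if flipping
the value of `v` can change the value of `f`. -/
def EssentialIn {V : Type*} [DecidableEq V] (f : (V → ZMod 2) → ZMod 2) (v : V) : Prop :=
  ∃ x, f x ≠ f (Function.update x v (x v + 1))

/-- A Boolean function is canalizing if some variable `v` has an input value `a` that
forces the output value `b`. -/
def IsCanalizing {V : Type*} (f : (V → ZMod 2) → ZMod 2) : Prop :=
  ∃ (v : V) (a b : ZMod 2), ∀ x, x v = a → f x = b

/-- The extended monomial on the variable set `S` with constants `a`,
`M(x) = ∏_{j ∈ S} (x_j + a_j)`. -/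
def extMonomial {V : Type*} (S : Finset V) (a : V → ZMod 2) (x : V → ZMod 2) : ZMod 2 :=
  ∏ j ∈ S, (x j + a j)

/-- The nested form `M₁(M₂(⋯(M_{r-1}(M_r·p + 1) + 1)⋯) + 1)` determined by a list of
layers (variable sets) `L`, constants `a`, and a core polynomial `p`. For `L = []` it
is just `p`. -/
def nestedLayers {V : Type*} (a : V → ZMod 2) (p : (V → ZMod 2) → ZMod 2) :
    List (Finset V) → (V → ZMod 2) → ZMod 2
  | [], x => p x
  | [S], x => extMonomial S a x * p x
  | S :: T :: Ss, x => extMonomial S a x * (nestedLayers a p (T :: Ss) x + 1)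

/-- `IsStratification f L a p q` says that
`f = M₁(M₂(⋯(M_{r-1}(M_r·p_C + 1) + 1)⋯) + 1) + q` is a representation of `f` as in
the He–Macauley stratification theorem: the layers `Mᵢ = ∏_{j ∈ Sᵢ} (x_j + a_j)` are
nonconstant extended monomials in pairwise disjoint variable sets, the core polynomial
`p` is independent of all layer variables and is identically `1` or non-canalizing,
and the exceptional-case conditions hold (if `p ≡ 1` and `r ≠ 1` then `k_r ≥ 2`; if
`p ≡ 1`, `r = 1`, `k₁ = 1` then `q = 0`; and for `r = 0` the representation is
`f = p_C`, i.e. `q = 0`). -/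
def IsStratification {V : Type*} [DecidableEq V] (f : (V → ZMod 2) → ZMod 2)
    (L : List (Finset V)) (a : V → ZMod 2) (p : (V → ZMod 2) → ZMod 2) (q : ZMod 2) :
    Prop :=
  (∀ S ∈ L, S.Nonempty) ∧
  L.Pairwise Disjoint ∧
  (∀ S ∈ L, ∀ v ∈ S, ¬ EssentialIn p v) ∧
  (p = (fun _ => 1) ∨ ¬ IsCanalizing p) ∧
  (p = (fun _ => 1) → L.length ≠ 1 → ∀ S ∈ L.getLast?, 2 ≤ S.card) ∧
  (p = (fun _ => 1) → ∀ S, L = [S] → S.card = 1 → q = 0) ∧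
  (L = [] → q = 0) ∧
  f = fun x => nestedLayers a p L x + q

namespace StratAux

open scoped Classical

variable {n : ℕ}

lemma zadd (a : ZMod 2) : a + a = 0 := by revert a; decide
lemma zK1 (a : ZMod 2) : a + 1 + a = 1 := by revert a; decide
lemma zK3 (a : ZMod 2) : a + 1 + 1 = a := by revert a; decide
lemma zcases (a : ZMod 2) : a = 0 ∨ a = 1 := by revert a; decide
lemma zne {a b : ZMod 2} (h : a ≠ b) : a = b + 1 := by revert a b h; decide
lemma zK2 {a b : ZMod 2} (h : a ≠ b + 1) : a = b := by revert a b h; decide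

lemma extMonomial_congr {S : Finset (Fin n)} {a a' x : Fin n → ZMod 2}
    (h : ∀ v ∈ S, a v = a' v) : extMonomial S a x = extMonomial S a' x :=
  Finset.prod_congr rfl fun v hv => by rw [h v hv]

lemma nested_congr {a a' : Fin n → ZMod 2} {p : (Fin n → ZMod 2) → ZMod 2} :
    ∀ (L : List (Finset (Fin n))), (∀ S ∈ L, ∀ v ∈ S, a v = a' v) →
      ∀ x, nestedLayers a p L x = nestedLayers a' p L x
  | [], _, _ => rfl
  | [S], h, x => by
      simp only [nestedLayers]
      rw [extMonomial_congr (fun v hv => h S (by simp) v hv)]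
  | S :: T :: Ss, h, x => by
      simp only [nestedLayers]
      rw [extMonomial_congr (fun v hv => h S (by simp) v hv),
          nested_congr (T :: Ss) (fun U hU v hv => h U (List.mem_cons_of_mem _ hU) v hv) x]

lemma nested_cons {a : Fin n → ZMod 2} {p : (Fin n → ZMod 2) → ZMod 2} (S : Finset (Fin n)) :
    ∀ (L : List (Finset (Fin n))), L ≠ [] →
      ∀ x, nestedLayers a p (S :: L) x = extMonomial S a x * (nestedLayers a p L x + 1)
  | [], h, _ => absurd rfl h
  | _ :: _, _, _ => rfl

def setTo (S : Finset (Fin n)) (A : Fin n → ZMod 2) (x : Fin n → ZMod 2) : Fin n → ZMod 2 :=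
  fun v => if v ∈ S then A v + 1 else x v

lemma setTo_eq_self {S : Finset (Fin n)} {A x : Fin n → ZMod 2}
    (h : ∀ w ∈ S, x w = A w + 1) : setTo S A x = x := by
  funext w
  simp only [setTo]
  split
  · exact (h w ‹_›).symm
  · rfl

lemma setTo_update_mem {S : Finset (Fin n)} {A x : Fin n → ZMod 2} {v : Fin n} {c : ZMod 2}
    (hv : v ∈ S) : setTo S A (Function.update x v c) = setTo S A x := by
  funext w
  simp only [setTo]
  split
  · rfl
  · next hws => rw [Function.update_of_ne (show w ≠ v by rintro rfl; exact hws hv)]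

lemma setTo_update_notMem {S : Finset (Fin n)} {A x : Fin n → ZMod 2} {v : Fin n} {c : ZMod 2}
    (hv : v ∉ S) : setTo S A (Function.update x v c) = Function.update (setTo S A x) v c := by
  funext w
  by_cases hw : w = v
  · subst hw; simp [setTo, hv]
  · simp [setTo, Function.update_of_ne hw]

lemma setTo_apply_notMem {S : Finset (Fin n)} {A x : Fin n → ZMod 2} {v : Fin n}
    (hv : v ∉ S) : setTo S A x v = x v := if_neg hv

lemma factor {S : Finset (Fin n)} {A : Fin n → ZMod 2} {b : ZMod 2}
    {F : (Fin n → ZMod 2) → ZMod 2}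
    (hS : ∀ v ∈ S, ∀ x, x v = A v → F x = b) (x : Fin n → ZMod 2) :
    F x = extMonomial S A x * (F (setTo S A x) + b) + b := by
  by_cases hx : ∀ w ∈ S, x w = A w + 1
  · rw [setTo_eq_self hx]
    have hm : extMonomial S A x = 1 :=
      Finset.prod_eq_one fun w hw => by rw [hx w hw]; exact zK1 _
    rw [hm, one_mul, add_assoc, zadd, add_zero]
  · push_neg at hx
    obtain ⟨w, hw, hxw⟩ := hx
    have hxw' : x w = A w := zK2 hxw
    have hm : extMonomial S A x = 0 :=
      Finset.prod_eq_zero hw (by rw [hxw']; exact zadd _)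
    rw [hS w hw x hxw', hm, zero_mul, zero_add]

lemma not_essential_iff {F : (Fin n → ZMod 2) → ZMod 2} {v : Fin n} :
    ¬ EssentialIn F v ↔ ∀ x, F x = F (Function.update x v (x v + 1)) := by
  simp [EssentialIn]

lemma eq_of_forall_not_essential {F : (Fin n → ZMod 2) → ZMod 2}
    (h : ∀ v : Fin n, ¬ EssentialIn F v) (x y : Fin n → ZMod 2) : F x = F y := by
  have key : ∀ (k : ℕ) (x : Fin n → ZMod 2),
      (Finset.univ.filter (fun i => x i ≠ y i)).card = k → F x = F y := by
    intro k
    induction k with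
    | zero =>
      intro x hx
      rw [Finset.card_eq_zero] at hx
      have hxy : x = y := by
        funext i
        by_contra hi
        have : i ∈ Finset.univ.filter (fun i => x i ≠ y i) := by simp [hi]
        rw [hx] at this
        exact absurd this (Finset.notMem_empty i)
      rw [hxy]
    | succ k ih =>
      intro x hx
      have hne : (Finset.univ.filter (fun i => x i ≠ y i)).Nonempty := by
        rw [← Finset.card_pos, hx]; omega
      obtain ⟨i, hi⟩ := hne
      have hxy : x i ≠ y i := (Finset.mem_filter.mp hi).2
      have hupd : Function.update x i (x i + 1) = Function.update x i (y i) := by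
        rw [← zne (Ne.symm hxy)]
      have h1 : F x = F (Function.update x i (y i)) := by
        rw [← hupd]; exact (not_essential_iff.mp (h i)) x
      rw [h1]
      apply ih
      have hset : (Finset.univ.filter (fun j => Function.update x i (y i) j ≠ y j))
          = (Finset.univ.filter (fun j => x j ≠ y j)).erase i := by
        ext j
        by_cases hj : j = i
        · subst hj; simp
        · simp [Function.update_of_ne hj, hj]
      rw [hset, Finset.card_erase_of_mem hi, hx]
      omega
  exact key _ x rfl

lemma essential_of_canal {F : (Fin n → ZMod 2) → ZMod 2} {v : Fin n} {α b : ZMod 2}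
    (hnc : ∃ x y, F x ≠ F y) (h : ∀ x, x v = α → F x = b) : EssentialIn F v := by
  by_contra hv
  rw [not_essential_iff] at hv
  have hall : ∀ x, F x = b := by
    intro x
    by_cases hx : x v = α
    · exact h x hx
    · rw [hv x]
      apply h
      rw [Function.update_self, zne hx, zK3]
  obtain ⟨x, y, hxy⟩ := hnc
  exact hxy ((hall x).trans (hall y).symm)

lemma output_unique {F : (Fin n → ZMod 2) → ZMod 2} {v w : Fin n} {α β b b' : ZMod 2}
    (hnc : ∃ x y, F x ≠ F y) (hlin : ¬ ∃ (u : Fin n) (c : ZMod 2), F = fun x => x u + c)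
    (hv : ∀ x, x v = α → F x = b) (hw : ∀ x, x w = β → F x = b') : b = b' := by
  by_cases hvw : v = w
  · subst hvw
    by_cases hab : α = β
    · subst hab
      exact (hv (fun _ => α) rfl).symm.trans (hw (fun _ => α) rfl)
    · have hβ : β = α + 1 := zne (Ne.symm hab)
      by_cases hbb : b = b'
      · exfalso
        obtain ⟨x, y, hxy⟩ := hnc
        have hall : ∀ x, F x = b := by
          intro x
          by_cases hx : x v = α
          · exact hv x hx
          · rw [hbb]; exact hw x (by rw [zne hx, hβ])
        exact hxy ((hall x).trans (hall y).symm)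
      · exfalso
        apply hlin
        refine ⟨v, α + b, funext fun x => ?_⟩
        by_cases hx : x v = α
        · rw [hv x hx, hx]
          have hid : ∀ α b : ZMod 2, b = α + (α + b) := by decide
          exact hid α b
        · have hx1 : x v = α + 1 := zne hx
          have hb' : b' = b + 1 := zne (Ne.symm hbb)
          rw [hw x (by rw [hx1, hβ]), hx1, hb']
          have hid : ∀ α b : ZMod 2, b + 1 = α + 1 + (α + b) := by decide
          exact hid α b
  · set x : Fin n → ZMod 2 := Function.update (Function.update (fun _ => 0) v α) w β with hxdef
    have hxw : x w = β := by rw [hxdef]; simp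
    have hxv : x v = α := by rw [hxdef]; simp [Function.update_of_ne hvw]
    exact (hv x hxv).symm.trans (hw x hxw)

lemma essential_add_one {g : (Fin n → ZMod 2) → ZMod 2} {u : Fin n} :
    EssentialIn (fun x => g x + 1) u ↔ EssentialIn g u := by
  simp only [EssentialIn, ne_eq, add_left_inj]

lemma not_essential_of_invariant {g : (Fin n → ZMod 2) → ZMod 2} {v : Fin n}
    (h : ∀ x c, g (Function.update x v c) = g x) : ¬ EssentialIn g v := by
  rw [not_essential_iff]
  intro x
  rw [h]

lemma const_of_invariant_canal {g : (Fin n → ZMod 2) → ZMod 2} {v : Fin n} {β γ : ZMod 2}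
    (hinv : ∀ (x : Fin n → ZMod 2) c, g (Function.update x v c) = g x)
    (hc : ∀ x, x v = β → g x = γ) (x : Fin n → ZMod 2) : g x = γ := by
  rw [← hinv x β]
  exact hc _ (by simp)

lemma essential_linear (u : Fin n) (c : ZMod 2) : EssentialIn (fun x => x u + c) u := by
  refine ⟨fun _ => 0, ?_⟩
  simp only [Function.update_self]
  revert c; decide

noncomputable def essSet (F : (Fin n → ZMod 2) → ZMod 2) : Finset (Fin n) :=
  Finset.univ.filter fun v => EssentialIn F v


lemma main : ∀ (N : ℕ) (F : (Fin n → ZMod 2) → ZMod 2), (essSet F).card ≤ N →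
    (∃ x y, F x ≠ F y) → IsCanalizing F →
    ∃ (L : List (Finset (Fin n))) (A : Fin n → ZMod 2)
      (p : (Fin n → ZMod 2) → ZMod 2) (q : ZMod 2),
      L ≠ [] ∧
      (∀ S ∈ L, S.Nonempty) ∧
      (∀ S ∈ L, ∀ v ∈ S, EssentialIn F v) ∧
      L.Pairwise Disjoint ∧
      (∀ S ∈ L, ∀ v ∈ S, ¬ EssentialIn p v) ∧
      (∀ v, EssentialIn p v → EssentialIn F v) ∧
      (p = (fun _ => 1) ∨ ¬ IsCanalizing p) ∧
      (p = (fun _ => 1) → L.length ≠ 1 → ∀ S ∈ L.getLast?, 2 ≤ S.card) ∧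
      (p = (fun _ => 1) → ∀ S, L = [S] → S.card = 1 → q = 0) ∧
      ((∃ v α, ∀ x, x v = α → F x = 0) → q = 0) ∧
      F = fun x => nestedLayers A p L x + q := by
  intro N
  induction N with
  | zero =>
    intro F hcard hnc _
    exfalso
    obtain ⟨x, y, hxy⟩ := hnc
    have hempty : essSet F = ∅ := Finset.card_eq_zero.mp (Nat.le_zero.mp hcard)
    refine hxy (eq_of_forall_not_essential (fun v hv => ?_) x y)
    have : v ∈ essSet F := by simp [essSet, hv]
    rw [hempty] at this
    exact Finset.notMem_empty v this
  | succ N ih =>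
    intro F hcard hnc hcan
    by_cases hlin : ∃ (u : Fin n) (c : ZMod 2), F = fun x => x u + c
    · -- linear case
      obtain ⟨u, c, rfl⟩ := hlin
      refine ⟨[{u}], fun _ => c, fun _ => 1, 0, by simp, by simp, ?_, by simp,
        by simp [EssentialIn], by simp [EssentialIn], Or.inl rfl, ?_, fun _ _ _ _ => rfl,
        fun _ => rfl, ?_⟩
      · intro S hS v hv
        have hS' : S = {u} := by simpa using hS
        subst hS'
        have hv' : v = u := by simpa using hv
        rw [hv']
        exact essential_linear u c
      · intro _ h1
        exact absurd rfl h1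
      · funext x
        simp [nestedLayers, extMonomial]
    · -- main case
      obtain ⟨v₀, α₀, b, hv₀⟩ := hcan
      set S : Finset (Fin n) :=
        Finset.univ.filter (fun v => ∃ α, ∀ x, x v = α → F x = b) with hSdef
      have hv₀S : v₀ ∈ S := by
        rw [hSdef, Finset.mem_filter]
        exact ⟨Finset.mem_univ _, α₀, hv₀⟩
      set A : Fin n → ZMod 2 :=
        fun v => if h : ∃ α, ∀ x, x v = α → F x = b then h.choose else 0 with hAdef
      have hS : ∀ v ∈ S, ∀ x, x v = A v → F x = b := by
        intro v hv x hx
        rw [hSdef, Finset.mem_filter] at hv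
        obtain ⟨-, h⟩ := hv
        refine h.choose_spec x ?_
        rw [hx, hAdef]
        simp only [dif_pos h]
      set g : (Fin n → ZMod 2) → ZMod 2 := fun x => F (setTo S A x) + b with hgdef
      have hfac : ∀ x, F x = extMonomial S A x * g x + b := fun x => factor hS x
      have hginv : ∀ v ∈ S, ∀ x c, g (Function.update x v c) = g x := by
        intro v hv x c
        simp only [hgdef]
        rw [setTo_update_mem hv]
      have hgne : ∀ v ∈ S, ¬ EssentialIn g v :=
        fun v hv => not_essential_of_invariant (fun x c => hginv v hv x c)
      have hgF : ∀ u, EssentialIn g u → EssentialIn F u := by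
        intro u hu
        have huS : u ∉ S := fun huS => hgne u huS hu
        obtain ⟨x, hx⟩ := hu
        refine ⟨setTo S A x, fun hFe => hx ?_⟩
        show g x = g (Function.update x u (x u + 1))
        simp only [hgdef]
        rw [setTo_update_notMem huS]
        rw [setTo_apply_notMem huS] at hFe
        rw [hFe]
      have hEssF : ∀ v ∈ S, EssentialIn F v :=
        fun v hv => essential_of_canal hnc (hS v hv)
      have hqcond : (∃ w β, ∀ x, x w = β → F x = 0) → b = 0 := by
        rintro ⟨w, β, hw⟩
        exact output_unique hnc hlin (hS v₀ hv₀S) hw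
      by_cases hgconst : ∀ x y : Fin n → ZMod 2, g x = g y
      · -- g constant
        rcases zcases (g (fun _ => 0)) with hc | hc
        · exfalso
          obtain ⟨x, y, hxy⟩ := hnc
          have hF : ∀ x, F x = b := fun x => by
            rw [hfac x, hgconst x (fun _ => 0), hc, mul_zero, zero_add]
          exact hxy ((hF x).trans (hF y).symm)
        · have hg1 : ∀ x, g x = 1 := fun x => (hgconst x _).trans hc
          have hFM : ∀ x, F x = extMonomial S A x + b := fun x => by
            rw [hfac x, hg1, mul_one]
          have hScard : 2 ≤ S.card := by
            rcases Nat.lt_or_ge S.card 2 with h | h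
            · exfalso
              have h1 : S.card = 1 := by
                have := Finset.card_pos.mpr ⟨v₀, hv₀S⟩
                omega
              obtain ⟨w, hw⟩ := Finset.card_eq_one.mp h1
              apply hlin
              refine ⟨w, A w + b, funext fun x => ?_⟩
              rw [hFM x, hw, extMonomial, Finset.prod_singleton, add_assoc]
            · exact h
          refine ⟨[S], A, fun _ => 1, b, by simp, ?_, ?_, by simp,
            by simp [EssentialIn], by simp [EssentialIn], Or.inl rfl,
            fun _ h1 => absurd rfl h1, ?_, hqcond, ?_⟩
          · intro T hT
            have : T = S := by simpa using hT
            subst this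
            exact ⟨v₀, hv₀S⟩
          · intro T hT v hv
            have : T = S := by simpa using hT
            subst this
            exact hEssF v hv
          · intro _ T hT hcT
            exfalso
            rw [List.cons.injEq] at hT
            obtain ⟨rfl, -⟩ := hT
            omega
          · funext x
            rw [hFM x]
            simp [nestedLayers]
      · -- g nonconstant
        push_neg at hgconst
        by_cases hgcan : IsCanalizing g
        · -- g canalizing: recursive case
          obtain ⟨w, β, γ, hwg⟩ := hgcan
          have hγ : γ = 1 := by
            rcases zcases γ with h0 | h1
            · exfalso
              subst h0
              have hwS : w ∉ S := by
                intro hwS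
                obtain ⟨x, y, hxy⟩ := hgconst
                have hh := const_of_invariant_canal (fun x c => hginv w hwS x c) hwg
                exact hxy ((hh x).trans (hh y).symm)
              have hFb : ∀ x, x w = β → F x = b := fun x hx => by
                rw [hfac x, hwg x hx, mul_zero, zero_add]
              have : w ∈ S := by
                rw [hSdef, Finset.mem_filter]
                exact ⟨Finset.mem_univ _, β, hFb⟩
              exact hwS this
            · exact h1
          subst hγ
          set h : (Fin n → ZMod 2) → ZMod 2 := fun x => g x + 1 with hhdef
          have hh0 : ∀ x, x w = β → h x = 0 := fun x hx => by
            simp only [hhdef]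
            rw [hwg x hx]
            exact zadd 1
          have hessgh : ∀ u, EssentialIn h u ↔ EssentialIn g u := fun u => by
            simp only [hhdef]
            exact essential_add_one
          have hhnc : ∃ x y, h x ≠ h y := by
            obtain ⟨x, y, hxy⟩ := hgconst
            refine ⟨x, y, fun hcc => hxy ?_⟩
            simp only [hhdef] at hcc
            exact add_right_cancel hcc
          have hcards : (essSet h).card ≤ N := by
            have hsub : essSet h ⊆ essSet F := by
              intro u hu
              simp only [essSet, Finset.mem_filter, Finset.mem_univ, true_and] at hu ⊢
              exact hgF u ((hessgh u).mp hu)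
            have hv₀F : v₀ ∈ essSet F := by
              simp only [essSet, Finset.mem_filter, Finset.mem_univ, true_and]
              exact essential_of_canal hnc hv₀
            have hv₀h : v₀ ∉ essSet h := by
              simp only [essSet, Finset.mem_filter, Finset.mem_univ, true_and]
              rw [hessgh]
              exact hgne v₀ hv₀S
            have hlt : (essSet h).card < (essSet F).card :=
              Finset.card_lt_card ((Finset.ssubset_iff_of_subset hsub).mpr ⟨v₀, hv₀F, hv₀h⟩)
            omega
          obtain ⟨L', A', p', q', hL'ne, hL'nonempty, hL'ess, hL'pw, hL'pess, hpess,
            hpcore, hlast, hsingle, hq0, heq⟩ := ih h hcards hhnc ⟨w, β, 0, hh0⟩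
          have hq'0 : q' = 0 := hq0 ⟨w, β, hh0⟩
          subst hq'0
          have hnested : ∀ x, h x = nestedLayers A' p' L' x := by
            intro x
            rw [heq]
            simp
          have hSdisj : ∀ T ∈ L', ∀ u ∈ T, u ∉ S := by
            intro T hT u hu huS
            exact (hgne u huS) ((hessgh u).mp (hL'ess T hT u hu))
          have hgx : ∀ x, g x = nestedLayers A' p' L' x + 1 := by
            intro x
            rw [← hnested x]
            simp only [hhdef]
            rw [zK3]
          have hFx : ∀ x, F x = extMonomial S A x * (nestedLayers A' p' L' x + 1) + b := by
            intro x
            rw [hfac x, hgx x]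
          by_cases hmerge : p' = (fun _ => 1) ∧ ∃ S', L' = [S'] ∧ S'.card = 1
          · -- merge trailing singleton layer
            obtain ⟨hp'1, S', hL'eq, hcS'⟩ := hmerge
            obtain ⟨u, hu⟩ := Finset.card_eq_one.mp hcS'
            subst hL'eq
            subst hu
            have huh : EssentialIn h u := hL'ess {u} (by simp) u (by simp)
            have huS : u ∉ S := fun huS => (hgne u huS) ((hessgh u).mp huh)
            set A'' : Fin n → ZMod 2 := fun v => if v = u then A' u + 1 else A v with hA''
            have hA''S : ∀ v ∈ S, A'' v = A v := by
              intro v hv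
              simp only [hA'']
              rw [if_neg (by rintro rfl; exact huS hv)]
            have hkey : ∀ x, F x = extMonomial (insert u S) A'' x + b := by
              intro x
              rw [hFx x]
              have h1 : nestedLayers A' p' [{u}] x = x u + A' u := by
                simp [nestedLayers, extMonomial, hp'1]
              rw [h1]
              have h4 : extMonomial (insert u S) A'' x = (x u + A' u + 1) * extMonomial S A x := by
                rw [extMonomial, Finset.prod_insert huS]
                have h2 : x u + A'' u = x u + A' u + 1 := by
                  simp only [hA'', if_pos rfl]
                  rw [add_assoc]
                have h3 : (∏ j ∈ S, (x j + A'' j)) = extMonomial S A x :=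
                  Finset.prod_congr rfl fun v hv => by rw [hA''S v hv]
                rw [h2, h3]
              rw [h4, mul_comm]
            refine ⟨[insert u S], A'', fun _ => 1, b, by simp, by simp, ?_, by simp,
              by simp [EssentialIn], by simp [EssentialIn], Or.inl rfl,
              fun _ h1 => absurd rfl h1, ?_, hqcond, ?_⟩
            · intro T hT v hv
              have : T = insert u S := by simpa using hT
              subst this
              rcases Finset.mem_insert.mp hv with rfl | hvS
              · exact hgF v ((hessgh v).mp huh)
              · exact hEssF v hvS
            · intro _ T hT hcT
              exfalso
              rw [List.cons.injEq] at hT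
              obtain ⟨rfl, -⟩ := hT
              rw [Finset.card_insert_of_notMem huS] at hcT
              have := Finset.card_pos.mpr ⟨v₀, hv₀S⟩
              omega
            · funext x
              rw [hkey x]
              simp [nestedLayers]
          · -- general recursive case
            set A'' : Fin n → ZMod 2 := fun v => if v ∈ S then A v else A' v with hA''
            have hA''S : ∀ v ∈ S, A'' v = A v := fun v hv => by
              simp only [hA'']; rw [if_pos hv]
            have hA''L : ∀ T ∈ L', ∀ v ∈ T, A'' v = A' v := by
              intro T hT v hv
              simp only [hA'']
              rw [if_neg (hSdisj T hT v hv)]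
            refine ⟨S :: L', A'', p', b, by simp, ?_, ?_, ?_, ?_, ?_, hpcore, ?_, ?_, hqcond, ?_⟩
            · intro T hT
              rcases List.mem_cons.mp hT with rfl | hT'
              · exact ⟨v₀, hv₀S⟩
              · exact hL'nonempty T hT'
            · intro T hT v hv
              rcases List.mem_cons.mp hT with rfl | hT'
              · exact hEssF v hv
              · exact hgF v ((hessgh v).mp (hL'ess T hT' v hv))
            · rw [List.pairwise_cons]
              refine ⟨fun T hT => Finset.disjoint_left.mpr (fun {v} hvS hvT => ?_), hL'pw⟩
              exact hSdisj T hT v hvT hvS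
            · intro T hT v hv
              rcases List.mem_cons.mp hT with rfl | hT'
              · intro hEp
                exact (hgne v hv) ((hessgh v).mp (hpess v hEp))
              · exact hL'pess T hT' v hv
            · intro v hv
              exact hgF v ((hessgh v).mp (hpess v hv))
            · intro hp1 _
              obtain ⟨U, Us, rfl⟩ := List.exists_cons_of_ne_nil hL'ne
              rw [List.getLast?_cons_cons]
              by_cases hlen : (U :: Us).length = 1
              · obtain ⟨S', hS'⟩ := List.length_eq_one_iff.mp hlen
                rw [hS']
                intro T hT
                have hTS' : T = S' := by simpa using hT.symm
                subst hTS'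
                have hcT : T.card ≠ 1 := by
                  intro hc1
                  exact hmerge ⟨hp1, T, hS', hc1⟩
                have : T.Nonempty := hL'nonempty T (by rw [hS']; simp)
                have := Finset.card_pos.mpr this
                omega
              · exact hlast hp1 hlen
            · intro _ T hT _
              exfalso
              rw [List.cons.injEq] at hT
              exact hL'ne hT.2
            · funext x
              rw [hFx x, nested_cons S L' hL'ne x]
              have h1 : extMonomial S A'' x = extMonomial S A x :=
                extMonomial_congr hA''S
              have h2 : nestedLayers A'' p' L' x = nestedLayers A' p' L' x :=
                nested_congr L' hA''L x
              rw [h1, h2]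
        · -- g not canalizing
          refine ⟨[S], A, g, b, by simp, ?_, ?_, by simp, ?_, hgF, Or.inr hgcan, ?_, ?_,
            hqcond, ?_⟩
          · intro T hT
            have : T = S := by simpa using hT
            subst this
            exact ⟨v₀, hv₀S⟩
          · intro T hT v hv
            have : T = S := by simpa using hT
            subst this
            exact hEssF v hv
          · intro T hT v hv
            have : T = S := by simpa using hT
            subst this
            exact hgne v hv
          · intro hp1
            exfalso
            obtain ⟨x, y, hxy⟩ := hgconst
            rw [hp1] at hxy
            exact hxy rfl
          · intro hp1
            exfalso
            obtain ⟨x, y, hxy⟩ := hgconst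
            rw [hp1] at hxy
            exact hxy rfl
          · funext x
            rw [hfac x]
            simp [nestedLayers]

end StratAux


/-- **existence part of the stratification theorem.** Every Boolean
function `f ≢ 0` admits a stratified representation
`f = M₁(M₂(⋯(M_{r-1}(M_r·p_C + 1) + 1)⋯) + 1) + q`; when `f` is not canalizing the
representation has `r = 0` and `p_C = f`. -/
theorem stmt_7 (n : ℕ) (f : (Fin n → ZMod 2) → ZMod 2) (hf : f ≠ fun _ => 0) :
    ∃ (L : List (Finset (Fin n))) (a : Fin n → ZMod 2)
      (p : (Fin n → ZMod 2) → ZMod 2) (q : ZMod 2),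
      IsStratification f L a p q ∧ (¬ IsCanalizing f → L = [] ∧ p = f) := by
  classical
  by_cases hconst : ∀ x y, f x = f y
  · have hf1 : f = fun _ => 1 := by
      funext x
      rcases StratAux.zcases (f x) with h0 | h1
      · exfalso
        apply hf
        funext y
        rw [hconst y x, h0]
      · exact h1
    refine ⟨[], fun _ => 0, f, 0, ⟨by simp, by simp, by simp, Or.inl hf1, ?_, ?_,
      fun _ => rfl, ?_⟩, fun _ => ⟨rfl, rfl⟩⟩
    · intro _ _ T hT
      simp at hT
    · intro _ T hT
      simp at hT
    · funext x
      simp [nestedLayers]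
  · push_neg at hconst
    by_cases hcan : IsCanalizing f
    · obtain ⟨L, A, p, q, hLne, h2, h3, h4, h5, h6, h7, h8, h9, h10, h11⟩ :=
        StratAux.main (StratAux.essSet f).card f le_rfl hconst hcan
      exact ⟨L, A, p, q, ⟨h2, h4, h5, h7, h8, h9, fun h => absurd h hLne, h11⟩,
        fun hnc => absurd hcan hnc⟩
    · refine ⟨[], fun _ => 0, f, 0, ⟨by simp, by simp, by simp, Or.inr hcan, ?_, ?_,
        fun _ => rfl, ?_⟩, fun _ => ⟨rfl, rfl⟩⟩
      · intro _ _ T hT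
        simp at hT
      · intro _ T hT
        simp at hT
      · funext x
        simp [nestedLayers]
end

section
/- (Uniqueness part of the stratification theorem.) For a Boolean function f : 𝔽₂ⁿ → 𝔽₂ with f ≢ 0, the representation f = M₁(M₂(⋯(M_{r-1}(M_r·p_C + 1) + 1)⋯) + 1) + q — where each M_i is a nonconstant extended monomial, each variable appears in exactly one of M₁, …, M_r, p_C, the core polynomial p_C is identically 1 or non-canalizing, q ∈ 𝔽₂, and the exceptional-case conditions hold (if p_C ≡ 1 and r ≠ 1 then k_r ≥ 2; if p_C ≡ 1, r = 1, k₁ = 1 then q = 0) — is unique: the number of layers r, the extended monomials M₁, …, M_r (as functions, equivalently their variable sets and constants), the core polynomial p_C, and the constant q are all uniquely determined by f. -/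
/-! Outside the exceptional case `f = x_w + a_w`, the canalizing variables of
`f = M₁ · G + q` are exactly the variables `x_j` of `M₁`, with canalizing inputs `a_j` and
canalized output `q`: any other canalization would make the cofactor `G` (which is `p_C`
or `M₂(⋯) + 1`, itself a stratification with constant `1`) constant or canalizing with
output `0`, which the conditions on `p_C` and on the last layer exclude. So `f` determines
`M₁` and `q`; evaluating where `M₁ = 1` determines `G`, and induction on the number of
layers finishes. -/

section Boolean

variable {V : Type*}

def CanalizesAt (g : (V → ZMod 2) → ZMod 2) (v : V) (α β : ZMod 2) : Prop :=
  ∀ x, x v = α → g x = β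

def IsCore (p : (V → ZMod 2) → ZMod 2) : Prop :=
  p = (fun _ => 1) ∨ ¬ IsCanalizing p

theorem zmod_two_eq_add_one_of_ne {c d : ZMod 2} (h : c ≠ d) : c = d + 1 := by
  revert c d; decide

theorem IsCore.not_canalizesAt_zero {p : (V → ZMod 2) → ZMod 2} (hp : IsCore p) (w : V)
    (α : ZMod 2) : ¬ CanalizesAt p w α 0 := by
  rcases hp with rfl | hp
  · exact fun h => one_ne_zero (h (fun _ => α) rfl)
  · exact fun h => hp ⟨w, α, 0, h⟩

theorem IsCore.exists_eq_one {p : (V → ZMod 2) → ZMod 2} (hp : IsCore p) (w : V) :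
    ∃ y, p y = 1 := by
  by_contra! h
  exact hp.not_canalizesAt_zero w 0 fun x _ =>
    (zmod_two_eq_add_one_of_ne (h x)).trans (CharTwo.add_self_eq_zero 1)

theorem canalizesAt_add_const [DecidableEq V] {w v : V} {c α β : ZMod 2}
    (h : CanalizesAt (fun x => x w + c) v α β) : v = w ∧ β = α + c := by
  have hβ : β = α + c := (h (fun _ => α) rfl).symm
  refine ⟨by_contra fun hvw => ?_, hβ⟩
  have h1 := h (Function.update (fun _ => α) w (α + 1)) (Function.update_of_ne hvw _ _)
  simp only [Function.update_self] at h1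
  rw [hβ, add_right_comm, add_eq_left] at h1
  exact one_ne_zero h1

variable {S : Finset V} {a x : V → ZMod 2}

theorem extMonomial_eq_zero {j : V} (hj : j ∈ S) (hx : x j = a j) : extMonomial S a x = 0 :=
  Finset.prod_eq_zero hj (by rw [hx, CharTwo.add_self_eq_zero])

theorem extMonomial_eq_one (h : ∀ j ∈ S, x j = a j + 1) : extMonomial S a x = 1 :=
  Finset.prod_eq_one fun j hj => by
    rw [h j hj, add_right_comm, CharTwo.add_self_eq_zero, zero_add]

def innerLayers (a : V → ZMod 2) (p : (V → ZMod 2) → ZMod 2) :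
    List (Finset V) → (V → ZMod 2) → ZMod 2
  | [] => p
  | S :: L => fun x => nestedLayers a p (S :: L) x + 1

theorem nestedLayers_cons (p : (V → ZMod 2) → ZMod 2) (L : List (Finset V)) (x : V → ZMod 2) :
    nestedLayers a p (S :: L) x = extMonomial S a x * innerLayers a p L x := by
  cases L <;> rfl

theorem innerLayers_cons (p : (V → ZMod 2) → ZMod 2) (L : List (Finset V)) (x : V → ZMod 2) :
    innerLayers a p (S :: L) x = extMonomial S a x * innerLayers a p L x + 1 := by
  rw [← nestedLayers_cons]; rfl

theorem nestedLayers_cons_eq_zero {j : V} (p : (V → ZMod 2) → ZMod 2) (L : List (Finset V))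
    (hj : j ∈ S) (hx : x j = a j) : nestedLayers a p (S :: L) x = 0 := by
  rw [nestedLayers_cons, extMonomial_eq_zero hj hx, zero_mul]

theorem exists_innerLayers_eq_one {p : (V → ZMod 2) → ZMod 2} {L : List (Finset V)}
    (hL : ∀ T ∈ L, T.Nonempty) (hp : ∃ y, p y = 1) : ∃ x, innerLayers a p L x = 1 := by
  cases L with
  | nil => exact hp
  | cons T L =>
    obtain ⟨j, hj⟩ := hL T List.mem_cons_self
    exact ⟨a, by rw [innerLayers_cons, extMonomial_eq_zero hj rfl, zero_mul, zero_add]⟩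

end Boolean

section Essential

variable {V : Type*} [DecidableEq V]

theorem not_essentialIn_iff {g : (V → ZMod 2) → ZMod 2} {v : V} :
    ¬ EssentialIn g v ↔ ∀ x c, g (Function.update x v c) = g x := by
  refine ⟨fun h x c => ?_, fun h ⟨x, hx⟩ => hx (h x _).symm⟩
  by_cases hc : c = x v
  · rw [hc, Function.update_eq_self]
  · by_contra hne
    rw [zmod_two_eq_add_one_of_ne hc] at hne
    exact h ⟨x, Ne.symm hne⟩

theorem apply_piecewise_of_not_essentialIn {g : (V → ZMod 2) → ZMod 2} {s : Finset V}
    (hg : ∀ v ∈ s, ¬ EssentialIn g v) (x y : V → ZMod 2) : g (s.piecewise x y) = g y := by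
  induction s using Finset.induction_on with
  | empty => rw [Finset.piecewise_empty]
  | insert b s _ ih =>
    rw [Finset.piecewise_insert, not_essentialIn_iff.mp (hg b (Finset.mem_insert_self b s)),
      ih fun v hv => hg v (Finset.mem_insert_of_mem hv)]

theorem not_essentialIn_extMonomial {S : Finset V} {v : V} (hv : v ∉ S) (a : V → ZMod 2) :
    ¬ EssentialIn (extMonomial S a) v :=
  not_essentialIn_iff.mpr fun x c => Finset.prod_congr rfl fun j hj => by
    rw [Function.update_of_ne (ne_of_mem_of_not_mem hj hv)]

theorem not_essentialIn_mul {f g : (V → ZMod 2) → ZMod 2} {v : V} (hf : ¬ EssentialIn f v)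
    (hg : ¬ EssentialIn g v) : ¬ EssentialIn (fun x => f x * g x) v :=
  not_essentialIn_iff.mpr fun x c => by
    rw [not_essentialIn_iff.mp hf, not_essentialIn_iff.mp hg]

theorem not_essentialIn_innerLayers {a : V → ZMod 2} {p : (V → ZMod 2) → ZMod 2} {v : V}
    {L : List (Finset V)} (hp : ¬ EssentialIn p v) (hL : ∀ T ∈ L, v ∉ T) :
    ¬ EssentialIn (innerLayers a p L) v := by
  induction L with
  | nil => exact hp
  | cons T L ih =>
    have hT := not_essentialIn_mul (not_essentialIn_extMonomial (hL T List.mem_cons_self) a)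
      (ih fun U hU => hL U (List.mem_cons_of_mem T hU))
    refine not_essentialIn_iff.mpr fun x c => ?_
    rw [innerLayers_cons, innerLayers_cons]
    exact congrArg (· + 1) (not_essentialIn_iff.mp hT x c)

theorem canalizesAt_extMonomial_mul {S : Finset V} {a : V → ZMod 2}
    {G : (V → ZMod 2) → ZMod 2} (hS : S.Nonempty) (hG : ∀ v ∈ S, ¬ EssentialIn G v) {w : V}
    {α γ : ZMod 2} (h : CanalizesAt (fun x => extMonomial S a x * G x) w α γ) :
    (w ∈ S ∧ α = a w ∧ γ = 0) ∨ (S = {w} ∧ ∀ x, G x = γ) ∨ (γ = 0 ∧ CanalizesAt G w α 0) := by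
  have h : ∀ x, x w = α → extMonomial S a x * G x = γ := h
  by_cases hwa : w ∈ S ∧ α = a w
  · refine Or.inl ⟨hwa.1, hwa.2, ?_⟩
    rw [← h a hwa.2.symm, extMonomial_eq_zero hwa.1 rfl, zero_mul]
  have hα : w ∈ S → α = a w + 1 := fun hw => zmod_two_eq_add_one_of_ne fun he => hwa ⟨hw, he⟩
  -- On `M_S = 1` the product is `G`, and `G` does not see the variables of `S`.
  have hG_eq : ∀ x, x w = α → G x = γ := by
    intro x hx
    have hxw : S.piecewise (a + 1) x w = α := by
      by_cases hw : w ∈ S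
      · rw [Finset.piecewise_eq_of_mem _ _ _ hw, hα hw]; rfl
      · rw [Finset.piecewise_eq_of_notMem _ _ _ hw, hx]
    rw [← h _ hxw, extMonomial_eq_one fun j hj => S.piecewise_eq_of_mem _ _ hj, one_mul,
      apply_piecewise_of_not_essentialIn hG]
  by_cases hSw : S = {w}
  · have hw : w ∈ S := hSw ▸ Finset.mem_singleton_self w
    refine Or.inr (Or.inl ⟨hSw, fun x => ?_⟩)
    rw [← not_essentialIn_iff.mp (hG w hw) x α, hG_eq _ (Function.update_self _ _ _)]
  · obtain ⟨v, hv, hvw⟩ :=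
      Finset.not_subset.mp fun hsub => hSw (hS.subset_singleton_iff.mp hsub)
    have hγ : γ = 0 := by
      rw [← h (Function.update a w α) (Function.update_self _ _ _),
        extMonomial_eq_zero hv (Function.update_of_ne (Finset.notMem_singleton.mp hvw) _ _),
        zero_mul]
    exact Or.inr (Or.inr ⟨hγ, hγ ▸ hG_eq⟩)

end Essential

namespace IsStratification

variable {V : Type*} [DecidableEq V] {f : (V → ZMod 2) → ZMod 2} {S S' : Finset V}
  {L L' : List (Finset V)} {a a' : V → ZMod 2} {p p' : (V → ZMod 2) → ZMod 2} {q q' : ZMod 2}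

theorem isCore (h : IsStratification f L a p q) : IsCore p := h.2.2.2.1

theorem head_nonempty (h : IsStratification f (S :: L) a p q) : S.Nonempty :=
  h.1 S List.mem_cons_self

theorem eq_zero_of_exceptional (h : IsStratification f [S] a (fun _ => 1) q) (hS : S.card = 1) :
    q = 0 :=
  h.2.2.2.2.2.1 rfl S rfl hS

theorem apply_eq (h : IsStratification f L a p q) (x : V → ZMod 2) :
    f x = nestedLayers a p L x + q :=
  congrFun h.2.2.2.2.2.2.2 x

theorem eq_of_nil (h : IsStratification f [] a p q) : q = 0 ∧ f = p := by
  have hq := h.2.2.2.2.2.2.1 rfl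
  exact ⟨hq, funext fun x => by rw [h.apply_eq, hq, add_zero]; rfl⟩

theorem not_essentialIn_innerLayers (h : IsStratification f (S :: L) a p q) :
    ∀ v ∈ S, ¬ EssentialIn (innerLayers a p L) v := fun v hv =>
  _root_.not_essentialIn_innerLayers (h.2.2.1 S List.mem_cons_self v hv) fun T hT hvT =>
    Finset.disjoint_left.mp ((List.pairwise_cons.mp h.2.1).1 T hT) hv hvT

theorem canalizesAt_head (h : IsStratification f (S :: L) a p q) {v : V} (hv : v ∈ S) :
    CanalizesAt f v (a v) q := fun x hx => by
  rw [h.apply_eq, nestedLayers_cons_eq_zero p L hv hx, zero_add]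

theorem apply_piecewise (h : IsStratification f (S :: L) a p q) (x : V → ZMod 2) :
    f (S.piecewise (a + 1) x) = innerLayers a p L x + q := by
  rw [h.apply_eq, nestedLayers_cons, extMonomial_eq_one fun j hj => S.piecewise_eq_of_mem _ _ hj,
    one_mul, apply_piecewise_of_not_essentialIn h.not_essentialIn_innerLayers]

theorem exists_eq_add_one (h : IsStratification f (S :: L) a p q) : ∃ x, f x = q + 1 := by
  obtain ⟨w, -⟩ := h.head_nonempty
  obtain ⟨x, hx⟩ := exists_innerLayers_eq_one (a := a)
    (fun T hT => h.1 T (List.mem_cons_of_mem S hT)) (h.isCore.exists_eq_one w)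
  exact ⟨S.piecewise (a + 1) x, by rw [h.apply_piecewise, hx, add_comm]⟩

theorem not_const (h : IsStratification f (S :: L) a p q) (c : ZMod 2) : ¬ ∀ x, f x = c := by
  intro hc
  obtain ⟨w, hw⟩ := h.head_nonempty
  obtain ⟨x, hx⟩ := h.exists_eq_add_one
  rw [hc x, ← hc a, h.canalizesAt_head hw a rfl, left_eq_add] at hx
  exact one_ne_zero hx

theorem ne_of_isCore (h : IsStratification f (S :: L) a p q) (hp' : IsCore p') : p' ≠ f := by
  rintro rfl
  obtain ⟨w, hw⟩ := h.head_nonempty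
  rcases hp' with rfl | hp'
  · exact h.not_const 1 fun _ => rfl
  · exact hp' ⟨w, a w, q, h.canalizesAt_head hw⟩

theorem tail_not_exceptional {T : Finset V} (h : IsStratification f (S :: T :: L) a p q) :
    ¬ (p = (fun _ => 1) ∧ L = [] ∧ T.card = 1) := by
  rintro ⟨hp, rfl, hT⟩
  have := h.2.2.2.2.1 hp (by simp) T rfl
  omega

theorem tail {T : Finset V} (h : IsStratification f (S :: T :: L) a p q) :
    IsStratification (innerLayers a p (T :: L)) (T :: L) a p 1 := by
  refine ⟨fun U hU => h.1 U (List.mem_cons_of_mem S hU), (List.pairwise_cons.mp h.2.1).2,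
    fun U hU => h.2.2.1 U (List.mem_cons_of_mem S hU), h.isCore, fun hp _ => ?_, ?_, nofun, rfl⟩
  · simpa only [List.getLast?_cons_cons] using h.2.2.2.2.1 hp (by simp)
  · rintro hp U hU hcard
    obtain ⟨rfl, rfl⟩ := List.cons_eq_cons.mp hU
    exact absurd ⟨hp, rfl, hcard⟩ h.tail_not_exceptional

theorem canalizesAt_trichotomy (h : IsStratification f (S :: L) a p q) {w : V} {α β : ZMod 2}
    (hc : CanalizesAt f w α β) :
    (w ∈ S ∧ α = a w ∧ β = q) ∨ (S = {w} ∧ ∀ x, innerLayers a p L x = β + q) ∨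
      (β = q ∧ CanalizesAt (innerLayers a p L) w α 0) := by
  have hN : CanalizesAt (fun x => extMonomial S a x * innerLayers a p L x) w α (β + q) :=
    fun x hx => by
      beta_reduce
      rw [← nestedLayers_cons, ← CharTwo.add_eq_iff_eq_add, ← h.apply_eq, hc x hx]
  rcases canalizesAt_extMonomial_mul h.head_nonempty h.not_essentialIn_innerLayers hN
    with ⟨hw, hα, hβ⟩ | hS | ⟨hβ, hG⟩
  · exact Or.inl ⟨hw, hα, CharTwo.add_eq_zero.mp hβ⟩
  · exact Or.inr (Or.inl hS)
  · exact Or.inr (Or.inr ⟨CharTwo.add_eq_zero.mp hβ, hG⟩)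

theorem canalizesAt (h : IsStratification f (S :: L) a p q)
    (hE : ¬ (p = (fun _ => 1) ∧ L = [] ∧ S.card = 1)) {w : V} {α β : ZMod 2}
    (hc : CanalizesAt f w α β) : w ∈ S ∧ α = a w ∧ β = q := by
  induction L generalizing f S q w α β with
  | nil =>
    rcases h.canalizesAt_trichotomy hc with hS | ⟨hSw, hp_const⟩ | ⟨-, hp⟩
    · exact hS
    · rcases h.isCore with hp1 | hp
      · exact absurd ⟨hp1, rfl, by rw [hSw, Finset.card_singleton]⟩ hE
      · exact absurd ⟨w, 0, β + q, fun x _ => hp_const x⟩ hp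
    · exact absurd hp (h.isCore.not_canalizesAt_zero w α)
  | cons T L ih =>
    rcases h.canalizesAt_trichotomy hc with hS | ⟨-, hG⟩ | ⟨-, hG⟩
    · exact hS
    · exact absurd hG (h.tail.not_const _)
    · exact absurd (ih h.tail h.tail_not_exceptional hG).2.2 zero_ne_one

theorem exceptional_eq {w : V} (h : IsStratification f [{w}] a (fun _ => 1) q) :
    f = fun x => x w + a w := by
  funext x
  rw [h.apply_eq, h.eq_zero_of_exceptional (Finset.card_singleton w), add_zero]
  simp only [nestedLayers, extMonomial, Finset.prod_singleton, mul_one]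

theorem exceptional_of_exceptional (h : IsStratification f (S :: L) a p q)
    (h' : IsStratification f (S' :: L') a' p' q')
    (hE : p = (fun _ => 1) ∧ L = [] ∧ S.card = 1) :
    p' = (fun _ => 1) ∧ L' = [] ∧ S'.card = 1 := by
  by_contra hE'
  obtain ⟨rfl, rfl, hS⟩ := hE
  obtain ⟨w, rfl⟩ := Finset.card_eq_one.mp hS
  have hq : q = 0 := h.eq_zero_of_exceptional hS
  -- `f = x_w + a_w` canalizes at `w` with both outputs, so `f` cannot have a unique one.
  have h0 := (h'.canalizesAt hE' (h.canalizesAt_head (Finset.mem_singleton_self w))).2.2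
  have h1 := (h'.canalizesAt hE' (w := w) (α := a w + 1) (β := 1) fun x hx => by
    rw [h.exceptional_eq]
    beta_reduce
    rw [hx, add_right_comm, CharTwo.add_self_eq_zero, zero_add]).2.2
  exact zero_ne_one (hq.symm.trans (h0.trans h1.symm))

theorem head_unique (h : IsStratification f (S :: L) a p q)
    (h' : IsStratification f (S' :: L') a' p' q') :
    S = S' ∧ (∀ v ∈ S, a v = a' v) ∧ q = q' := by
  by_cases hE : p = (fun _ => 1) ∧ L = [] ∧ S.card = 1
  · obtain ⟨rfl, rfl, hS'⟩ := h.exceptional_of_exceptional h' hE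
    obtain ⟨rfl, rfl, hS⟩ := hE
    obtain ⟨w, rfl⟩ := Finset.card_eq_one.mp hS
    obtain ⟨w', rfl⟩ := Finset.card_eq_one.mp hS'
    have hq : q = 0 := h.eq_zero_of_exceptional hS
    have hq' : q' = 0 := h'.eq_zero_of_exceptional hS'
    obtain ⟨rfl, ha⟩ :=
      canalizesAt_add_const (h.exceptional_eq ▸ h'.canalizesAt_head (Finset.mem_singleton_self w'))
    refine ⟨rfl, ?_, hq.trans hq'.symm⟩
    simpa only [Finset.mem_singleton, forall_eq] using (CharTwo.add_eq_zero.mp (ha ▸ hq')).symm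
  · have hE' : ¬ (p' = (fun _ => 1) ∧ L' = [] ∧ S'.card = 1) := fun hE' =>
      hE (h'.exceptional_of_exceptional h hE')
    have key v (hv : v ∈ S) := h'.canalizesAt hE' (h.canalizesAt_head hv)
    have key' v (hv : v ∈ S') := h.canalizesAt hE (h'.canalizesAt_head hv)
    obtain ⟨v, hv⟩ := h.head_nonempty
    exact ⟨Finset.Subset.antisymm (fun v hv => (key v hv).1) (fun v hv => (key' v hv).1),
      fun v hv => (key v hv).2.1, (key v hv).2.2⟩

theorem innerLayers_eq (h : IsStratification f (S :: L) a p q)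
    (h' : IsStratification f (S :: L') a' p' q) (ha : ∀ v ∈ S, a v = a' v) :
    innerLayers a p L = innerLayers a' p' L' := by
  funext x
  have hx : S.piecewise (a + 1) x = S.piecewise (a' + 1) x :=
    S.piecewise_congr (fun j hj => by rw [Pi.add_apply, Pi.add_apply, ha j hj]) fun _ _ => rfl
  exact add_right_cancel ((h.apply_piecewise x).symm.trans (hx ▸ h'.apply_piecewise x))

theorem unique (h : IsStratification f L a p q) (h' : IsStratification f L' a' p' q') :
    L = L' ∧ (∀ S ∈ L, ∀ v ∈ S, a v = a' v) ∧ p = p' ∧ q = q' := by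
  induction L generalizing f L' q q' with
  | nil =>
    obtain ⟨hq, rfl⟩ := h.eq_of_nil
    cases L' with
    | nil =>
      obtain ⟨hq', hp⟩ := h'.eq_of_nil
      exact ⟨rfl, nofun, hp, hq.trans hq'.symm⟩
    | cons S' L' => exact absurd rfl (h'.ne_of_isCore h.isCore)
  | cons S L ih =>
    cases L' with
    | nil =>
      obtain ⟨-, rfl⟩ := h'.eq_of_nil
      exact absurd rfl (h.ne_of_isCore h'.isCore)
    | cons S' L' =>
      obtain ⟨rfl, ha, rfl⟩ := h.head_unique h'
      have hinner := h.innerLayers_eq h' ha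
      cases L with
      | nil =>
        cases L' with
        | nil => exact ⟨rfl, by simpa using ha, hinner, rfl⟩
        | cons T' L' => exact absurd hinner (h'.tail.ne_of_isCore h.isCore)
      | cons T L =>
        cases L' with
        | nil => exact absurd hinner.symm (h.tail.ne_of_isCore h'.isCore)
        | cons T' L' =>
          obtain ⟨hL, ha', hp, -⟩ := ih h.tail (hinner ▸ h'.tail)
          exact ⟨hL ▸ rfl, List.forall_mem_cons.mpr ⟨ha, ha'⟩, hp, rfl⟩

end IsStratification

theorem stmt_8_general (n : ℕ) (f : (Fin n → ZMod 2) → ZMod 2)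
    (L L' : List (Finset (Fin n))) (a a' : Fin n → ZMod 2)
    (p p' : (Fin n → ZMod 2) → ZMod 2) (q q' : ZMod 2)
    (h : IsStratification f L a p q) (h' : IsStratification f L' a' p' q') :
    L = L' ∧
    L.map (fun S => extMonomial S a) = L'.map (fun S => extMonomial S a') ∧
    p = p' ∧ q = q' := by
  obtain ⟨rfl, ha, hp, hq⟩ := h.unique h'
  refine ⟨rfl, List.map_congr_left fun S hS => ?_, hp, hq⟩
  exact funext fun x => Finset.prod_congr rfl fun j hj => by rw [ha S hS j hj]

/-- **uniqueness part of the stratification theorem.** For `f ≢ 0`, the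
stratified representation is unique: the list of layers (their variable sets), the
extended monomials `M₁, …, M_r` as functions, the core polynomial `p_C`, and the
constant `q` are all uniquely determined by `f`. -/
theorem stmt_8 (n : ℕ) (f : (Fin n → ZMod 2) → ZMod 2) (hf : f ≠ fun _ => 0)
    (L L' : List (Finset (Fin n))) (a a' : Fin n → ZMod 2)
    (p p' : (Fin n → ZMod 2) → ZMod 2) (q q' : ZMod 2)
    (h : IsStratification f L a p q) (h' : IsStratification f L' a' p' q') :
    L = L' ∧
    L.map (fun S => extMonomial S a) = L'.map (fun S => extMonomial S a') ∧
    p = p' ∧ q = q' :=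
  stmt_8_general n f L L' a a' p p' q q' h h'
end

section
/- Let f : 𝔽₂ⁿ → 𝔽₂, f ≢ 0, have stratified representation f = M₁(M₂(⋯(M_{r-1}(M_r·p_C + 1) + 1)⋯) + 1) + q with layers M₁, …, M_r. If the variable x_j appears in layer M_i with factor (x_j + a_j), then for every x with x_j = a_j and M₁(x) = M₂(x) = ⋯ = M_{i-1}(x) = 1, one has f(x) = q if i is odd and f(x) = q + 1 if i is even. Consequently, all variables in the same layer M_i share the same canalized output value b_i, and the canalized outputs of consecutive layers are distinct: b_i ≠ b_{i+1} for 1 ≤ i < r. -/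
/-! A variable `x_j` of layer `Mᵢ` receiving its canalizing input kills `Mᵢ`; when all more
dominant layers equal `1`, the nested form `M₀(M₁(⋯) + 1)` unwinds one `+ 1` per layer above
`Mᵢ` and then hits `Mᵢ = 0`, so `f(x) = q + i (mod 2)`. This value depends only on `i`, and
it changes parity from one layer to the next. -/

lemma extMonomial_eq_zero_of_mem {V : Type*} {S : Finset V} {a x : V → ZMod 2} {j : V}
    (hj : j ∈ S) (hx : x j = a j) : extMonomial S a x = 0 :=
  Finset.prod_eq_zero hj (by rw [hx, CharTwo.add_self_eq_zero])

lemma ite_even_add_one_zmod_two (i : ℕ) :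
    (if Even (i + 1) then 0 else 1 : ZMod 2) = (if Even i then 0 else 1) + 1 := by
  by_cases h : Even i <;> simp [Nat.even_add_one, h]; decide

lemma ite_even_ne_ite_even_add_one_zmod_two (q : ZMod 2) (i : ℕ) :
    q + (if Even i then 0 else 1) ≠ q + (if Even (i + 1) then 0 else 1) := by
  rw [ite_even_add_one_zmod_two, ← add_assoc]
  exact left_ne_add.mpr one_ne_zero

theorem nestedLayers_eq_of_extMonomial_eq_zero {V : Type*} (a : V → ZMod 2)
    (p : (V → ZMod 2) → ZMod 2) (x : V → ZMod 2) :
    ∀ (L : List (Finset V)) (i : ℕ) (hi : i < L.length),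
      extMonomial L[i] a x = 0 →
      (∀ (i' : ℕ) (hi' : i' < L.length), i' < i → extMonomial L[i'] a x = 1) →
      nestedLayers a p L x = if Even i then 0 else 1
  | [_], 0, _, h0, _ => by simp_all [nestedLayers]
  | _ :: _ :: _, 0, _, h0, _ => by simp_all [nestedLayers]
  | S :: T :: Ss, i + 1, hi, h0, hprev => by
      have hS : extMonomial S a x = 1 := hprev 0 (by simp) i.succ_pos
      have ih := nestedLayers_eq_of_extMonomial_eq_zero a p x (T :: Ss) i
        (by simpa using hi) h0
        (fun i' hi' hlt => hprev (i' + 1) (by simpa using hi') (by omega))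
      rw [nestedLayers, hS, one_mul, ih, ite_even_add_one_zmod_two]

theorem IsStratification.apply_eq_of_canalizing_input {V : Type*} [DecidableEq V]
    {f : (V → ZMod 2) → ZMod 2} {L : List (Finset V)} {a : V → ZMod 2}
    {p : (V → ZMod 2) → ZMod 2} {q : ZMod 2} (h : IsStratification f L a p q)
    (i : ℕ) (hi : i < L.length) {j : V} (hj : j ∈ L[i]) {x : V → ZMod 2} (hx : x j = a j)
    (hprev : ∀ (i' : ℕ) (hi' : i' < L.length), i' < i → extMonomial L[i'] a x = 1) :
    f x = q + if Even i then 0 else 1 := by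
  simp only [h.2.2.2.2.2.2.2]
  rw [nestedLayers_eq_of_extMonomial_eq_zero a p x L i hi
    (extMonomial_eq_zero_of_mem hj hx) hprev, add_comm]

-- Layers are indexed from `0`, so the paper's odd layers are the even `i` here.
theorem stmt_10_general (n : ℕ) (f : (Fin n → ZMod 2) → ZMod 2)
    (L : List (Finset (Fin n))) (a : Fin n → ZMod 2)
    (p : (Fin n → ZMod 2) → ZMod 2) (q : ZMod 2)
    (h : IsStratification f L a p q) :
    (∀ (i : ℕ) (hi : i < L.length), ∀ j ∈ L.get ⟨i, hi⟩, ∀ x,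
      x j = a j →
      (∀ (i' : ℕ) (hi' : i' < L.length), i' < i → extMonomial (L.get ⟨i', hi'⟩) a x = 1) →
      f x = q + if Even i then 0 else 1) ∧
    ∃ b : ℕ → ZMod 2,
      (∀ (i : ℕ) (hi : i < L.length), ∀ j ∈ L.get ⟨i, hi⟩, ∀ x,
        x j = a j →
        (∀ (i' : ℕ) (hi' : i' < L.length), i' < i → extMonomial (L.get ⟨i', hi'⟩) a x = 1) →
        f x = b i) ∧
      (∀ i : ℕ, i + 1 < L.length → b i ≠ b (i + 1)) := by
  have canalized_output := fun i hi j hj x hx hprev =>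
    h.apply_eq_of_canalizing_input i hi (j := j) hj (x := x) hx hprev
  exact ⟨canalized_output, fun i => q + if Even i then 0 else 1, canalized_output,
    fun i _ => ite_even_ne_ite_even_add_one_zmod_two q i⟩

/-- **Remark 4.9(b).** If variable `j` appears in layer `Mᵢ` of the
stratified representation of `f` (with factor `(x_j + a_j)`), then for every `x` with
`x_j = a_j` and `M₀(x) = ⋯ = M_{i-1}(x) = 1` one has `f(x) = q` if the layer index `i`
is even and `f(x) = q + 1` if `i` is odd (layers indexed from `0` here; the paper's
1-based "odd"/"even" is swapped accordingly). Consequently all variables of the same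
layer share the same canalized output `bᵢ`, and the canalized outputs of consecutive
layers are distinct. -/
theorem stmt_10 (n : ℕ) (f : (Fin n → ZMod 2) → ZMod 2) (hf : f ≠ fun _ => 0)
    (L : List (Finset (Fin n))) (a : Fin n → ZMod 2)
    (p : (Fin n → ZMod 2) → ZMod 2) (q : ZMod 2)
    (h : IsStratification f L a p q) :
    (∀ (i : ℕ) (hi : i < L.length), ∀ j ∈ L.get ⟨i, hi⟩, ∀ x,
      x j = a j →
      (∀ (i' : ℕ) (hi' : i' < L.length), i' < i → extMonomial (L.get ⟨i', hi'⟩) a x = 1) →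
      f x = q + if Even i then 0 else 1) ∧
    ∃ b : ℕ → ZMod 2,
      (∀ (i : ℕ) (hi : i < L.length), ∀ j ∈ L.get ⟨i, hi⟩, ∀ x,
        x j = a j →
        (∀ (i' : ℕ) (hi' : i' < L.length), i' < i → extMonomial (L.get ⟨i', hi'⟩) a x = 1) →
        f x = b i) ∧
      (∀ i : ℕ, i + 1 < L.length → b i ≠ b (i + 1)) :=
  stmt_10_general n f L a p q h
end

section
/- (Lemma 4.11, decoupling via canalization.) Let F(x,y) = (F₁(x), H(x,y)) be a decomposable Boolean network with H = (h₁, …, h_{n₂}), and suppose exactly one downstream coordinate h_s depends on the upstream variables x (i.e., for every t ≠ s, h_t(x,y) = h_t(x',y) for all x, x', y). Suppose h_s ≢ 0 has stratified representation with layers M₁, …, M_r and core p_C, and let M_ℓ be the most dominant layer of h_s containing an upstream variable (set ℓ = r + 1 if all upstream variables of h_s appear only in p_C). Let y_u be a downstream variable (not an upstream variable) appearing in a layer M_j of h_s with j < ℓ, with factor (y_u + a). Then setting y_u to its canalizing value a decouples the two modules: for all x, x' ∈ 𝔽₂^{n₁} and all y ∈ 𝔽₂^{n₂} with y_u-coordinate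 equal to a, H(x, y) = H(x', y); that is, on the subspace {y_u = a} the downstream update is independent of the upstream variables. -/
lemma extMonomial_congr' {V : Type*} (S : Finset V) (a z z' : V → ZMod 2)
    (h : ∀ v ∈ S, z v = z' v) : extMonomial S a z = extMonomial S a z' :=
  Finset.prod_congr rfl (fun v hv => by rw [h v hv])

lemma nested_zero' {V : Type*} (a : V → ZMod 2) (p : (V → ZMod 2) → ZMod 2) :
    ∀ (L : List (Finset V)) (j : ℕ) (hj : j < L.length) (z z' : V → ZMod 2),
    (∀ (i : ℕ) (hi : i < L.length), i ≤ j → ∀ v ∈ L.get ⟨i, hi⟩, z v = z' v) →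
    extMonomial (L.get ⟨j, hj⟩) a z = 0 →
    nestedLayers a p L z = nestedLayers a p L z'
  | [], j, hj => absurd hj (by simp)
  | S :: rest, j, hj => by
    intro z z' hagree h0
    have hS : extMonomial S a z = extMonomial S a z' :=
      extMonomial_congr' S a z z' (fun v hv => hagree 0 (by simp) (Nat.zero_le j) v hv)
    cases j with
    | zero =>
      have hz : extMonomial S a z = 0 := h0
      have hz' : extMonomial S a z' = 0 := by rw [← hS]; exact hz
      cases rest with
      | nil => simp [nestedLayers, hz, hz']
      | cons T Ss => simp [nestedLayers, hz, hz']
    | succ k =>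
      cases rest with
      | nil => exact absurd hj (by simp)
      | cons T Ss =>
        have hk : k < (T :: Ss).length := by
          simpa using Nat.lt_of_succ_lt_succ hj
        have ih := nested_zero' a p (T :: Ss) k hk z z'
          (fun i hi hik v hv =>
            hagree (i + 1) (by simpa using Nat.succ_lt_succ hi)
              (Nat.succ_le_succ hik) v hv)
          h0
        show extMonomial S a z * (nestedLayers a p (T :: Ss) z + 1)
            = extMonomial S a z' * (nestedLayers a p (T :: Ss) z' + 1)
        rw [hS, ih]

/-- **Lemma 4.11, decoupling via canalization.** Let
`F(x,y) = (F₁ x, H x y)` be a decomposable Boolean network in which exactly one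
downstream coordinate `h_s` depends on the upstream variables. View `h_s` as a Boolean
function `hs` on the variable set `Fin n₁ ⊕ Fin n₂` (upstream ⊕ downstream). Suppose
`hs ≢ 0` has a stratified representation with layers `L`, and the downstream variable
`y_u` appears in a layer `M_j` (with factor `(y_u + a)`) that is strictly more
dominant than every layer containing an upstream variable (hypothesis `hdom`: no layer
of index `≤ j` contains an upstream variable). Then setting `y_u` to its canalizing
value `a` decouples the modules: on the subspace `{y_u = a}` the downstream update `H`
is independent of the upstream variables. -/
theorem stmt_15 (n₁ n₂ : ℕ)
    (H : (Fin n₁ → ZMod 2) → (Fin n₂ → ZMod 2) → (Fin n₂ → ZMod 2))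
    (s : Fin n₂)
    (honly : ∀ t : Fin n₂, t ≠ s → ∀ x x' y, H x y t = H x' y t)
    (hs : ((Fin n₁ ⊕ Fin n₂) → ZMod 2) → ZMod 2)
    (hhs : ∀ x y, hs (Sum.elim x y) = H x y s)
    (hs0 : hs ≠ fun _ => 0)
    (L : List (Finset (Fin n₁ ⊕ Fin n₂))) (a : (Fin n₁ ⊕ Fin n₂) → ZMod 2)
    (p : ((Fin n₁ ⊕ Fin n₂) → ZMod 2) → ZMod 2) (q : ZMod 2)
    (h : IsStratification hs L a p q)
    (u : Fin n₂) (j : ℕ) (hj : j < L.length)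
    (hu : Sum.inr u ∈ L.get ⟨j, hj⟩)
    (hdom : ∀ (i : ℕ) (hi : i < L.length), i ≤ j →
      ∀ v ∈ L.get ⟨i, hi⟩, ∀ w : Fin n₁, v ≠ Sum.inl w) :
    ∀ (x x' : Fin n₁ → ZMod 2) (y : Fin n₂ → ZMod 2),
      y u = a (Sum.inr u) → H x y = H x' y := by
  intro x x' y hy
  funext t
  by_cases ht : t = s
  · subst ht
    rw [← hhs, ← hhs]
    obtain ⟨_, _, _, _, _, _, _, hrep⟩ := h
    rw [hrep]
    simp only
    congr 1
    apply nested_zero' a p L j hj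
    · intro i hi hij v hv
      cases v with
      | inl w => exact absurd rfl (hdom i hi hij _ hv w)
      | inr w => rfl
    · apply Finset.prod_eq_zero hu
      simp [hy, CharTwo.add_self_eq_zero]
  · exact honly t ht x x' y
end
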